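/- arXiv:2511.11735 — 6 statements merged into one kernel-verified Lean document; each statement's English description precedes it below -/
import Mathlib

section
/- For any two point sets X, Y ∈ R^{d×n} with columns x_1,...,x_n and y_1,...,y_n, the Hard-Gromov-Wasserstein distance d_D(X,Y) = min over permutations π of Σ_{i,j} | ‖x_i - x_j‖ - ‖y_{π(i)} - y_{π(j)}‖ | satisfies d_D(X,Y) ≤ 2 n^{3/2} · d_G(X,Y), where d_G(X,Y) = min over (π, R, t) ∈ S_n × O(d) × R^d of the Frobenius norm √(Σ_j ‖x_j - R y_{π(j)} - t‖²). -/
noncomputable def colDist {d n : ℕ} (X : Matrix (Fin d) (Fin n) ℝ) (i j : Fin n) : ℝ :=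
  Real.sqrt (∑ k, (X k i - X k j)^2)

/-- Hard-Gromov-Wasserstein distance. -/
noncomputable def dD {d n : ℕ} (X Y : Matrix (Fin d) (Fin n) ℝ) : ℝ :=
  ⨅ π : Equiv.Perm (Fin n), ∑ i, ∑ j, |colDist X i j - colDist Y (π i) (π j)|

/-- Procrustes Matching metric. -/
noncomputable def dG {d n : ℕ} (X Y : Matrix (Fin d) (Fin n) ℝ) : ℝ :=
  ⨅ π : Equiv.Perm (Fin n),
    ⨅ R : {R : Matrix (Fin d) (Fin d) ℝ // R ∈ Matrix.orthogonalGroup (Fin d) ℝ},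
      ⨅ t : Fin d → ℝ,
        Real.sqrt (∑ j, ∑ k,
          (X k j - (∑ l, (R : Matrix (Fin d) (Fin d) ℝ) k l * Y l (π j)) - t k)^2)

open Matrix in
lemma orth_sum_sq {d : ℕ} (R : Matrix (Fin d) (Fin d) ℝ)
    (hR : R ∈ Matrix.orthogonalGroup (Fin d) ℝ) (v : Fin d → ℝ) :
    ∑ k, (∑ l, R k l * v l)^2 = ∑ l, (v l)^2 := by
  have h1 : Rᵀ * R = 1 := by
    have := hR.1
    simpa [Matrix.star_eq_conjTranspose] using this
  have h2 : ∀ l m, ∑ k, R k l * R k m = if l = m then 1 else 0 := by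
    intro l m
    have := congrFun (congrFun h1 l) m
    simpa [Matrix.mul_apply, Matrix.transpose_apply, Matrix.one_apply] using this
  calc ∑ k, (∑ l, R k l * v l)^2
      = ∑ k, ∑ l, ∑ m, (v l * v m) * (R k l * R k m) := by
        refine Finset.sum_congr rfl fun k _ => ?_
        rw [sq, Finset.sum_mul_sum]
        refine Finset.sum_congr rfl fun l _ => Finset.sum_congr rfl fun m _ => by ring
    _ = ∑ l, ∑ m, (v l * v m) * ∑ k, R k l * R k m := by
        rw [Finset.sum_comm]
        refine Finset.sum_congr rfl fun l _ => ?_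
        rw [Finset.sum_comm]
        simp [Finset.mul_sum]
    _ = ∑ l, (v l)^2 := by
        simp [h2, sq]

/-- norm of a vector viewed in Euclidean space -/
lemma nsq_eq {d : ℕ} (u : Fin d → ℝ) :
    ‖(EuclideanSpace.equiv (Fin d) ℝ).symm u‖ = Real.sqrt (∑ k, (u k)^2) := by
  rw [EuclideanSpace.norm_eq]
  congr 1
  refine Finset.sum_congr rfl fun k _ => ?_
  simp [Real.norm_eq_abs, sq_abs]

lemma sqrt_sub_sqrt_abs_le {d : ℕ} (a b p q : Fin d → ℝ) (h : ∀ k, a k - b k = p k - q k) :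
    |Real.sqrt (∑ k, (a k)^2) - Real.sqrt (∑ k, (b k)^2)|
      ≤ Real.sqrt (∑ k, (p k)^2) + Real.sqrt (∑ k, (q k)^2) := by
  have hab : a - b = p - q := funext h
  set E := (EuclideanSpace.equiv (Fin d) ℝ).symm with hE
  rw [← nsq_eq a, ← nsq_eq b, ← nsq_eq p, ← nsq_eq q]
  refine (abs_norm_sub_norm_le (E a) (E b)).trans ?_
  have : E a - E b = E p - E q := by
    rw [← map_sub, ← map_sub, hab]
  rw [this]
  exact norm_sub_le _ _

theorem dD_le_dG {d n : ℕ} (X Y : Matrix (Fin d) (Fin n) ℝ) :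
    dD X Y ≤ 2 * (n : ℝ) ^ ((3 : ℝ)/2) * dG X Y := by
  rcases Nat.eq_zero_or_pos n with hn | hn
  · subst hn
    simp [dD, dG, Real.zero_rpow (by norm_num : (3:ℝ)/2 ≠ 0), ciInf_const]
  have hnp : (0:ℝ) < n := by exact_mod_cast hn
  have hc : (0:ℝ) < 2 * (n : ℝ) ^ ((3 : ℝ)/2) := by positivity
  rw [dG, mul_comm, ← div_le_iff₀ hc]
  refine le_ciInf fun π => le_ciInf fun R => le_ciInf fun t => ?_
  rw [div_le_iff₀ hc]
  set f : ℝ := Real.sqrt (∑ j, ∑ k,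
      (X k j - (∑ l, (R : Matrix (Fin d) (Fin d) ℝ) k l * Y l (π j)) - t k)^2) with hf
  -- dD ≤ the sum at π
  have hbdd : BddBelow (Set.range fun π : Equiv.Perm (Fin n) =>
      ∑ i, ∑ j, |colDist X i j - colDist Y (π i) (π j)|) := by
    refine ⟨0, ?_⟩
    rintro x ⟨σ, rfl⟩
    positivity
  refine le_trans (ciInf_le hbdd π) ?_
  -- pointwise vectors
  set z : Fin n → Fin d → ℝ :=
    fun i k => (∑ l, (R : Matrix (Fin d) (Fin d) ℝ) k l * Y l (π i)) + t k with hz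
  set e : Fin n → ℝ := fun i => Real.sqrt (∑ k, (X k i - z i k)^2) with he
  have hYz : ∀ i j, colDist Y (π i) (π j) = Real.sqrt (∑ k, (z i k - z j k)^2) := by
    intro i j
    rw [colDist]
    congr 1
    rw [← orth_sum_sq (R : Matrix (Fin d) (Fin d) ℝ) R.2 (fun l => Y l (π i) - Y l (π j))]
    refine (Finset.sum_congr rfl fun k _ => ?_).symm
    congr 1
    simp only [hz, mul_sub, Finset.sum_sub_distrib]
    ring
  have hpt : ∀ i j, |colDist X i j - colDist Y (π i) (π j)| ≤ e i + e j := by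
    intro i j
    rw [hYz, colDist]
    exact sqrt_sub_sqrt_abs_le (fun k => X k i - X k j) (fun k => z i k - z j k)
      (fun k => X k i - z i k) (fun k => X k j - z j k) (fun k => by ring)
  have hsum : ∑ i, ∑ j, |colDist X i j - colDist Y (π i) (π j)| ≤ 2 * n * ∑ i, e i := by
    calc ∑ i, ∑ j, |colDist X i j - colDist Y (π i) (π j)|
        ≤ ∑ i, ∑ j, (e i + e j) :=
          Finset.sum_le_sum fun i _ => Finset.sum_le_sum fun j _ => hpt i j
      _ = 2 * n * ∑ i, e i := by
          simp only [Finset.sum_add_distrib, Finset.sum_const, Finset.card_fin,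
            nsmul_eq_mul, ← Finset.mul_sum]
          ring
  refine hsum.trans ?_
  -- Cauchy-Schwarz
  have hef : ∑ i, e i ≤ Real.sqrt n * f := by
    have h1 : (∑ i, e i)^2 ≤ (n : ℝ) * ∑ i, (e i)^2 := by
      have := sq_sum_le_card_mul_sum_sq (s := Finset.univ) (f := e)
      simpa using this
    have h2 : ∑ i, (e i)^2 = ∑ j, ∑ k,
        (X k j - (∑ l, (R : Matrix (Fin d) (Fin d) ℝ) k l * Y l (π j)) - t k)^2 := by
      refine Finset.sum_congr rfl fun i _ => ?_
      rw [he]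
      rw [Real.sq_sqrt (by positivity)]
      refine Finset.sum_congr rfl fun k _ => ?_
      simp [hz]; ring_nf
    have he0 : 0 ≤ ∑ i, e i := Finset.sum_nonneg fun i _ => Real.sqrt_nonneg _
    calc ∑ i, e i = Real.sqrt ((∑ i, e i)^2) := (Real.sqrt_sq he0).symm
      _ ≤ Real.sqrt ((n : ℝ) * ∑ i, (e i)^2) := Real.sqrt_le_sqrt h1
      _ = Real.sqrt n * f := by
          rw [Real.sqrt_mul (le_of_lt hnp), hf, h2]
  have hrpow : (n : ℝ) ^ ((3 : ℝ)/2) = (n : ℝ) * Real.sqrt n := by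
    have : (3:ℝ)/2 = 1 + 1/2 := by norm_num
    rw [this, Real.rpow_add hnp, Real.rpow_one, Real.sqrt_eq_rpow]
  have hfnn : 0 ≤ f := Real.sqrt_nonneg _
  calc 2 * (n:ℝ) * ∑ i, e i ≤ 2 * n * (Real.sqrt n * f) := by
        have h2n : (0:ℝ) ≤ 2 * n := by positivity
        exact mul_le_mul_of_nonneg_left hef h2n
    _ = f * (2 * (n : ℝ) ^ ((3 : ℝ)/2)) := by rw [hrpow]; ring
end

section
/- For any two point sets X, Y ∈ R^{d×n} such that all columns of X and Y have Euclidean norm at most 1, the Procrustes Matching distance satisfies d_G(X,Y)² ≤ (4n+2) · d_D(X,Y). -/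
open Matrix in
theorem dot_self_nonneg' {a : ℕ} (x : Fin a → ℝ) : 0 ≤ x ⬝ᵥ x :=
  Finset.sum_nonneg fun i _ => mul_self_nonneg _

open Matrix in
theorem dot_sq_le' {a : ℕ} (x y : Fin a → ℝ) : (x ⬝ᵥ y)^2 ≤ (x ⬝ᵥ x) * (y ⬝ᵥ y) := by
  have := Finset.sum_mul_sq_le_sq_mul_sq Finset.univ x y
  simpa [dotProduct, pow_two] using this

/-- contraction predicate -/
def IsContr {a b : ℕ} (A : Matrix (Fin a) (Fin b) ℝ) : Prop :=
  ∀ x : Fin b → ℝ, dotProduct (A.mulVec x) (A.mulVec x) ≤ dotProduct x x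

open Matrix in
theorem IsContr.mul {a b c : ℕ} {A : Matrix (Fin a) (Fin b) ℝ} {B : Matrix (Fin b) (Fin c) ℝ}
    (hA : IsContr A) (hB : IsContr B) : IsContr (A * B) := by
  intro x
  rw [← Matrix.mulVec_mulVec]
  exact le_trans (hA _) (hB x)

open Matrix in
theorem IsContr.transpose {a b : ℕ} {A : Matrix (Fin a) (Fin b) ℝ} (hA : IsContr A) : IsContr Aᵀ := by
  intro x
  set y := Aᵀ *ᵥ x with hy
  have h1 : y ⬝ᵥ y = x ⬝ᵥ (A *ᵥ y) := by
    rw [hy, Matrix.mulVec_transpose, ← Matrix.dotProduct_mulVec, dotProduct_comm]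
  have h2 : (x ⬝ᵥ (A *ᵥ y))^2 ≤ (x ⬝ᵥ x) * ((A *ᵥ y) ⬝ᵥ (A *ᵥ y)) := dot_sq_le' _ _
  have h3 := hA y
  have hyy := dot_self_nonneg' y
  have hxx := dot_self_nonneg' x
  nlinarith [h1, h2, h3, hyy, hxx]

open Matrix in
/-- spectral decomposition package for real symmetric matrices -/
theorem spectral_real {m : ℕ} (A : Matrix (Fin m) (Fin m) ℝ) (hA : Aᵀ = A) :
    ∃ (E : Matrix (Fin m) (Fin m) ℝ) (μ : Fin m → ℝ),
      E * Eᵀ = 1 ∧ Eᵀ * E = 1 ∧ A = E * Matrix.diagonal μ * Eᵀ := by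
  have hh : A.IsHermitian := by
    rw [Matrix.IsHermitian, Matrix.conjTranspose_eq_transpose_of_trivial, hA]
  refine ⟨(hh.eigenvectorUnitary : Matrix (Fin m) (Fin m) ℝ), hh.eigenvalues, ?_, ?_, ?_⟩
  · have := (Matrix.mem_unitaryGroup_iff).mp hh.eigenvectorUnitary.2
    rwa [Matrix.star_eq_conjTranspose, Matrix.conjTranspose_eq_transpose_of_trivial] at this
  · have := (Matrix.mem_unitaryGroup_iff').mp hh.eigenvectorUnitary.2
    rwa [Matrix.star_eq_conjTranspose, Matrix.conjTranspose_eq_transpose_of_trivial] at this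
  · have := hh.spectral_theorem
    rwa [Unitary.conjStarAlgAut_apply, Matrix.star_eq_conjTranspose, Matrix.conjTranspose_eq_transpose_of_trivial,
      RCLike.ofReal_real_eq_id, Function.id_comp] at this

open Matrix
section Helpers2
variable {m : ℕ}

theorem trace_diag_mul (v : Fin m → ℝ) (B : Matrix (Fin m) (Fin m) ℝ) :
    (Matrix.diagonal v * B).trace = ∑ i, v i * B i i := by
  simp [Matrix.trace, Matrix.diag, Matrix.mul_apply, Matrix.diagonal]

theorem sandwich_mul (E : Matrix (Fin m) (Fin m) ℝ) (hE : Eᵀ * E = 1) (v w : Fin m → ℝ) :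
    (E * Matrix.diagonal v * Eᵀ) * (E * Matrix.diagonal w * Eᵀ)
      = E * Matrix.diagonal (fun i => v i * w i) * Eᵀ := by
  have h : Matrix.diagonal v * (Eᵀ * E) * Matrix.diagonal w = Matrix.diagonal (fun i => v i * w i) := by
    rw [hE, mul_one, Matrix.diagonal_mul_diagonal]
  calc (E * Matrix.diagonal v * Eᵀ) * (E * Matrix.diagonal w * Eᵀ)
      = E * (Matrix.diagonal v * (Eᵀ * E) * Matrix.diagonal w) * Eᵀ := by
        simp only [Matrix.mul_assoc]
    _ = E * Matrix.diagonal (fun i => v i * w i) * Eᵀ := by rw [h]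

theorem trace_sandwich (E : Matrix (Fin m) (Fin m) ℝ) (hE : Eᵀ * E = 1) (v : Fin m → ℝ) :
    (E * Matrix.diagonal v * Eᵀ).trace = ∑ i, v i := by
  rw [Matrix.trace_mul_cycle, hE, one_mul]
  simp [Matrix.trace, Matrix.diag]

theorem trace_sandwich_mul (E : Matrix (Fin m) (Fin m) ℝ) (v : Fin m → ℝ)
    (S : Matrix (Fin m) (Fin m) ℝ) :
    ((E * Matrix.diagonal v * Eᵀ) * S).trace = ∑ i, v i * (Eᵀ * S * E) i i := by
  have h : (E * Matrix.diagonal v * Eᵀ) * S = E * (Matrix.diagonal v * (Eᵀ * S)) := by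
    simp only [Matrix.mul_assoc]
  rw [h, Matrix.trace_mul_comm, Matrix.mul_assoc, trace_diag_mul]

theorem conj_entry (E Z : Matrix (Fin m) (Fin m) ℝ) (i : Fin m) :
    (Eᵀ * Z * E) i i = (fun k => E k i) ⬝ᵥ (Z *ᵥ (fun k => E k i)) := by
  simp only [Matrix.mul_apply, Matrix.transpose_apply, dotProduct, Matrix.mulVec,
    Finset.sum_mul, Finset.mul_sum]
  rw [Finset.sum_comm]
  exact Finset.sum_congr rfl fun y _ => Finset.sum_congr rfl fun x _ => by ring

theorem conj_diag (E Z : Matrix (Fin m) (Fin m) ℝ) (hE2 : Eᵀ * E = 1)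
    (μ : Fin m → ℝ) (hZ : Z = E * Matrix.diagonal μ * Eᵀ) :
    Eᵀ * Z * E = Matrix.diagonal μ := by
  rw [hZ]
  calc Eᵀ * (E * Matrix.diagonal μ * Eᵀ) * E
      = (Eᵀ * E) * Matrix.diagonal μ * (Eᵀ * E) := by simp only [Matrix.mul_assoc]
    _ = Matrix.diagonal μ := by rw [hE2, one_mul, mul_one]

theorem entry_bound (E : Matrix (Fin m) (Fin m) ℝ) (hE : E * Eᵀ = 1) (w : Fin m → ℝ)
    (hw : ∀ i, |w i| ≤ 1) (i j : Fin m) : |(E * Matrix.diagonal w * Eᵀ) i j| ≤ 1 := by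
  have hentry : (E * Matrix.diagonal w * Eᵀ) i j = ∑ k, E i k * w k * E j k := by
    simp [Matrix.mul_apply, Matrix.diagonal, Finset.sum_mul]
  rw [hentry]
  have h1 : |∑ k, E i k * w k * E j k| ≤ ∑ k, |E i k| * |E j k| := by
    refine le_trans (Finset.abs_sum_le_sum_abs _ _) (Finset.sum_le_sum fun k _ => ?_)
    rw [abs_mul, abs_mul]
    calc |E i k| * |w k| * |E j k| ≤ |E i k| * 1 * |E j k| := by
          gcongr; exact hw k
      _ = |E i k| * |E j k| := by ring
  refine le_trans h1 ?_
  have h2 : (∑ k, |E i k| * |E j k|)^2 ≤ (∑ k, |E i k|^2) * (∑ k, |E j k|^2) :=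
    Finset.sum_mul_sq_le_sq_mul_sq _ _ _
  have hrow : ∀ a : Fin m, ∑ k, |E a k|^2 = 1 := by
    intro a
    have h3 : (E * Eᵀ) a a = 1 := by rw [hE]; simp
    rw [Matrix.mul_apply] at h3
    simp only [Matrix.transpose_apply, sq_abs] at *
    calc ∑ k, E a k ^2 = ∑ k, E a k * E a k := by simp [pow_two]
      _ = 1 := h3
  rw [hrow i, hrow j, mul_one] at h2
  nlinarith [Finset.sum_nonneg (fun k (_ : k ∈ Finset.univ) => mul_nonneg (abs_nonneg (E i k)) (abs_nonneg (E j k)))]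

/-- Powers–Størmer type inequality, entrywise ℓ¹ version. -/
theorem powers_stormer (H K : Matrix (Fin m) (Fin m) ℝ)
    (hHs : Hᵀ = H) (hKs : Kᵀ = K)
    (hH : ∀ x, 0 ≤ x ⬝ᵥ (H *ᵥ x)) (hK : ∀ x, 0 ≤ x ⬝ᵥ (K *ᵥ x)) :
    ((H - K) * (H - K)).trace ≤ ∑ i, ∑ j, |(H * H - K * K) i j| := by
  set D := H - K with hD
  have hDs : Dᵀ = D := by rw [hD, Matrix.transpose_sub, hHs, hKs]
  obtain ⟨E, μ, hE1, hE2, hDspec⟩ := spectral_real D hDs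
  set w : Fin m → ℝ := fun i => if μ i < 0 then (-1 : ℝ) else 1 with hwdef
  set W := E * Matrix.diagonal w * Eᵀ with hW
  set N := E * Matrix.diagonal (fun i => |μ i|) * Eᵀ with hN
  set S := H + K with hS
  have hwμ : ∀ i, w i * μ i = |μ i| := by
    intro i; by_cases h : μ i < 0
    · simp only [hwdef, if_pos h]; rw [abs_of_neg h]; ring
    · simp only [hwdef, if_neg h]; rw [abs_of_nonneg (le_of_not_gt h)]; ring
  have hWD : W * D = N := by
    rw [hW, hDspec, hN, sandwich_mul E hE2]
    exact congrArg (fun f => E * Matrix.diagonal f * Eᵀ) (funext hwμ)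
  have hDW : D * W = N := by
    rw [hW, hDspec, hN, sandwich_mul E hE2]
    exact congrArg (fun f => E * Matrix.diagonal f * Eᵀ)
      (funext fun i => by rw [mul_comm]; exact hwμ i)
  have hDD : (D * D).trace = ∑ i, μ i * μ i := by
    rw [hDspec, sandwich_mul E hE2, trace_sandwich E hE2]
  have hid : D * S + S * D = (H * H - K * K) + (H * H - K * K) := by
    rw [hD, hS]; noncomm_ring
  have hdiagD : Eᵀ * D * E = Matrix.diagonal μ := conj_diag E D hE2 μ hDspec
  have hSentry : ∀ i, |μ i| ≤ (Eᵀ * S * E) i i := by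
    intro i
    have hDe : (Eᵀ * D * E) i i = μ i := by rw [hdiagD]; simp
    have heH : (0:ℝ) ≤ (Eᵀ * H * E) i i := by rw [conj_entry]; exact hH _
    have heK : (0:ℝ) ≤ (Eᵀ * K * E) i i := by rw [conj_entry]; exact hK _
    have hDHK : (Eᵀ * D * E) i i = (Eᵀ * H * E) i i - (Eᵀ * K * E) i i := by
      rw [hD, Matrix.mul_sub, Matrix.sub_mul]; simp
    have hSHK : (Eᵀ * S * E) i i = (Eᵀ * H * E) i i + (Eᵀ * K * E) i i := by
      rw [hS, Matrix.mul_add, Matrix.add_mul]; simp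
    rw [hSHK]
    rw [hDe] at hDHK
    rw [abs_le]; constructor <;> nlinarith
  have hNS : ∑ i, μ i * μ i ≤ (N * S).trace := by
    rw [hN, trace_sandwich_mul]
    refine Finset.sum_le_sum fun i _ => ?_
    calc μ i * μ i = |μ i| * |μ i| := (abs_mul_abs_self _).symm
      _ ≤ |μ i| * (Eᵀ * S * E) i i :=
          mul_le_mul_of_nonneg_left (hSentry i) (abs_nonneg _)
  have hWtr : (W * (D * S + S * D)).trace = 2 * (N * S).trace := by
    rw [Matrix.mul_add, Matrix.trace_add]
    have t1 : (W * (D * S)).trace = (N * S).trace := by rw [← Matrix.mul_assoc, hWD]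
    have t2 : (W * (S * D)).trace = (N * S).trace := by
      have ha : W * (S * D) = (W * S) * D := (Matrix.mul_assoc _ _ _).symm
      rw [ha, Matrix.trace_mul_comm, ← Matrix.mul_assoc, hDW]
    rw [t1, t2]; ring
  have hWbound : (W * (H * H - K * K)).trace ≤ ∑ i, ∑ j, |(H * H - K * K) i j| := by
    set A := H * H - K * K with hA
    have htr : (W * A).trace = ∑ i, ∑ j, W i j * A j i := by
      simp [Matrix.trace, Matrix.diag, Matrix.mul_apply]
    rw [htr]
    have hsum : ∑ i, ∑ j, W i j * A j i ≤ ∑ i, ∑ j, |A j i| := by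
      refine Finset.sum_le_sum fun i _ => Finset.sum_le_sum fun j _ => ?_
      calc W i j * A j i ≤ |W i j * A j i| := le_abs_self _
        _ = |W i j| * |A j i| := abs_mul _ _
        _ ≤ 1 * |A j i| := by
            refine mul_le_mul_of_nonneg_right ?_ (abs_nonneg _)
            exact entry_bound E hE1 w (fun k => by by_cases h : μ k < 0 <;> simp [hwdef, h]) i j
        _ = |A j i| := one_mul _
    refine le_trans hsum ?_
    rw [Finset.sum_comm]
  have hid2 : (W * (D * S + S * D)).trace = 2 * (W * (H * H - K * K)).trace := by
    rw [hid, Matrix.mul_add, Matrix.trace_add]; ring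
  rw [hDD]
  refine le_trans hNS (le_trans ?_ hWbound)
  rw [hid2] at hWtr
  linarith
end Helpers2

section Helpers3
variable {a b m : ℕ}

theorem sandwich_transpose (F : Matrix (Fin m) (Fin m) ℝ) (v : Fin m → ℝ) :
    (F * Matrix.diagonal v * Fᵀ)ᵀ = F * Matrix.diagonal v * Fᵀ := by
  rw [Matrix.transpose_mul, Matrix.transpose_mul, Matrix.diagonal_transpose,
    Matrix.transpose_transpose, Matrix.mul_assoc]

theorem dot_mulVec_left (F : Matrix (Fin a) (Fin b) ℝ) (x : Fin a → ℝ) (z : Fin b → ℝ) :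
    x ⬝ᵥ (F *ᵥ z) = (Fᵀ *ᵥ x) ⬝ᵥ z := by
  rw [Matrix.dotProduct_mulVec, ← Matrix.mulVec_transpose]

theorem dot_mulVec_self (W : Matrix (Fin a) (Fin b) ℝ) (x : Fin b → ℝ) :
    (W *ᵥ x) ⬝ᵥ (W *ᵥ x) = x ⬝ᵥ ((Wᵀ * W) *ᵥ x) := by
  rw [← Matrix.mulVec_mulVec, dot_mulVec_left]
  exact dotProduct_comm _ _

theorem quad_sandwich (F : Matrix (Fin m) (Fin m) ℝ) (v : Fin m → ℝ) (x : Fin m → ℝ) :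
    x ⬝ᵥ ((F * Matrix.diagonal v * Fᵀ) *ᵥ x) = ∑ i, v i * ((Fᵀ *ᵥ x) i)^2 := by
  rw [← Matrix.mulVec_mulVec, ← Matrix.mulVec_mulVec, dot_mulVec_left]
  set y := Fᵀ *ᵥ x
  simp only [dotProduct, Matrix.mulVec_diagonal]
  exact Finset.sum_congr rfl fun i _ => by ring

theorem factor {d n : ℕ} (U : Matrix (Fin d) (Fin n) ℝ) :
    ∃ (H : Matrix (Fin n) (Fin n) ℝ) (W : Matrix (Fin d) (Fin n) ℝ),
      Hᵀ = H ∧ (∀ x, 0 ≤ x ⬝ᵥ (H *ᵥ x)) ∧ H * H = Uᵀ * U ∧ W * H = U ∧ IsContr W ∧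
        Wᵀ * W * H = H := by
  set P := Uᵀ * U with hPdef
  have hPs : Pᵀ = P := by rw [hPdef, Matrix.transpose_mul, Matrix.transpose_transpose]
  obtain ⟨F, p, hF1, hF2, hP⟩ := spectral_real P hPs
  have hdiagP : Fᵀ * P * F = Matrix.diagonal p := conj_diag F P hF2 p hP
  have colsq : ∀ j, ∑ k, (U * F) k j * (U * F) k j = p j := by
    intro j
    have h1 : (U * F)ᵀ * (U * F) = Matrix.diagonal p := by
      rw [Matrix.transpose_mul, Matrix.mul_assoc, ← Matrix.mul_assoc Uᵀ U F, ← hPdef,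
        ← Matrix.mul_assoc, hdiagP]
    have h2 : ((U * F)ᵀ * (U * F)) j j = ∑ k, (U * F) k j * (U * F) k j := by
      simp only [Matrix.mul_apply, Matrix.transpose_apply]
    rw [h1] at h2
    simpa using h2.symm
  have hp_nonneg : ∀ j, 0 ≤ p j := fun j => by
    rw [← colsq j]; exact Finset.sum_nonneg fun k _ => mul_self_nonneg _
  have zero_col : ∀ j, p j = 0 → ∀ k, (U * F) k j = 0 := by
    intro j hj k
    have h0 : ∑ k, (U * F) k j * (U * F) k j = 0 := by rw [colsq j, hj]
    have := (Finset.sum_eq_zero_iff_of_nonneg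
      (fun k (_ : k ∈ Finset.univ) => mul_self_nonneg ((U * F) k j))).mp h0 k (Finset.mem_univ k)
    exact mul_self_eq_zero.mp this
  set sq : Fin n → ℝ := fun i => Real.sqrt (p i) with hsqdef
  set g : Fin n → ℝ := fun i => if p i = 0 then 0 else (Real.sqrt (p i))⁻¹ with hgdef
  set ind : Fin n → ℝ := fun i => if p i = 0 then (0:ℝ) else 1 with hinddef
  have hsq_ne : ∀ i, p i ≠ 0 → Real.sqrt (p i) ≠ 0 := fun i hi =>
    ne_of_gt (Real.sqrt_pos.mpr (lt_of_le_of_ne (hp_nonneg i) (Ne.symm hi)))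
  have hgsq : ∀ i, g i * sq i = ind i := by
    intro i; by_cases h : p i = 0
    · simp [hgdef, hinddef, h]
    · simp [hgdef, hinddef, hsqdef, h, inv_mul_cancel₀ (hsq_ne i h)]
  have hgpg : ∀ i, g i * p i * g i = ind i := by
    intro i; by_cases h : p i = 0
    · simp [hgdef, hinddef, h]
    · have hs : Real.sqrt (p i) * Real.sqrt (p i) = p i := Real.mul_self_sqrt (hp_nonneg i)
      have hne := hsq_ne i h
      simp only [hgdef, hinddef, if_neg h]
      rw [← hs]
      field_simp
      rw [Real.sqrt_sq (Real.sqrt_nonneg _)]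
  have hindsq : ∀ i, ind i * sq i = sq i := by
    intro i; by_cases h : p i = 0
    · simp [hinddef, hsqdef, h]
    · simp [hinddef, h]
  have hsqsq : ∀ i, sq i * sq i = p i := fun i => Real.mul_self_sqrt (hp_nonneg i)
  set H := F * Matrix.diagonal sq * Fᵀ with hHdef
  set W := U * (F * Matrix.diagonal g * Fᵀ) with hWdef
  have hUFind : U * F * Matrix.diagonal ind = U * F := by
    ext k j
    rw [Matrix.mul_diagonal]
    by_cases h : p j = 0
    · rw [zero_col j h k]; ring
    · simp [hinddef, h]
  refine ⟨H, W, sandwich_transpose F sq, ?_, ?_, ?_, ?_, ?_⟩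
  · intro x
    rw [hHdef, quad_sandwich]
    exact Finset.sum_nonneg fun i _ => mul_nonneg (Real.sqrt_nonneg _) (sq_nonneg _)
  · rw [hHdef, sandwich_mul F hF2]
    rw [show (fun i => sq i * sq i) = p from funext hsqsq, ← hP, hPdef]
  · rw [hWdef, hHdef, Matrix.mul_assoc, sandwich_mul F hF2,
      show (fun i => g i * sq i) = ind from funext hgsq, ← Matrix.mul_assoc,
      ← Matrix.mul_assoc, hUFind, Matrix.mul_assoc, hF1, Matrix.mul_one]
  · -- IsContr W
    have hWtW : Wᵀ * W = F * Matrix.diagonal ind * Fᵀ := by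
      rw [hWdef, Matrix.transpose_mul, sandwich_transpose]
      calc (F * Matrix.diagonal g * Fᵀ) * Uᵀ * (U * (F * Matrix.diagonal g * Fᵀ))
          = (F * Matrix.diagonal g * Fᵀ) * P * (F * Matrix.diagonal g * Fᵀ) := by
            rw [hPdef]; simp only [Matrix.mul_assoc]
        _ = (F * Matrix.diagonal g * Fᵀ) * ((F * Matrix.diagonal p * Fᵀ) *
              (F * Matrix.diagonal g * Fᵀ)) := by rw [hP]; simp only [Matrix.mul_assoc]
        _ = (F * Matrix.diagonal g * Fᵀ) * (F * Matrix.diagonal (fun i => p i * g i) * Fᵀ) := by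
              rw [sandwich_mul F hF2]
        _ = F * Matrix.diagonal (fun i => g i * (p i * g i)) * Fᵀ := by
              rw [sandwich_mul F hF2]
        _ = F * Matrix.diagonal ind * Fᵀ :=
              congrArg (fun f => F * Matrix.diagonal f * Fᵀ)
                (funext fun i => by rw [← hgpg i]; ring)
    intro x
    rw [dot_mulVec_self, hWtW, quad_sandwich]
    have h1 : ∑ i, ind i * ((Fᵀ *ᵥ x) i)^2 ≤ ∑ i, ((Fᵀ *ᵥ x) i)^2 := by
      refine Finset.sum_le_sum fun i _ => ?_
      by_cases h : p i = 0
      · simp [hinddef, h]; positivity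
      · simp [hinddef, h]
    refine le_trans h1 ?_
    have h2 : ∑ i, ((Fᵀ *ᵥ x) i)^2 = (Fᵀ *ᵥ x) ⬝ᵥ (Fᵀ *ᵥ x) := by
      simp [dotProduct, pow_two]
    rw [h2, dot_mulVec_self, Matrix.transpose_transpose, hF1, Matrix.one_mulVec]
  · -- Wᵀ * W * H = H
    have hWtW : Wᵀ * W = F * Matrix.diagonal ind * Fᵀ := by
      rw [hWdef, Matrix.transpose_mul, sandwich_transpose]
      calc (F * Matrix.diagonal g * Fᵀ) * Uᵀ * (U * (F * Matrix.diagonal g * Fᵀ))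
          = (F * Matrix.diagonal g * Fᵀ) * P * (F * Matrix.diagonal g * Fᵀ) := by
            rw [hPdef]; simp only [Matrix.mul_assoc]
        _ = (F * Matrix.diagonal g * Fᵀ) * ((F * Matrix.diagonal p * Fᵀ) *
              (F * Matrix.diagonal g * Fᵀ)) := by rw [hP]; simp only [Matrix.mul_assoc]
        _ = (F * Matrix.diagonal g * Fᵀ) * (F * Matrix.diagonal (fun i => p i * g i) * Fᵀ) := by
              rw [sandwich_mul F hF2]
        _ = F * Matrix.diagonal (fun i => g i * (p i * g i)) * Fᵀ := by
              rw [sandwich_mul F hF2]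
        _ = F * Matrix.diagonal ind * Fᵀ :=
              congrArg (fun f => F * Matrix.diagonal f * Fᵀ)
                (funext fun i => by rw [← hgpg i]; ring)
    rw [hWtW, hHdef, sandwich_mul F hF2,
      show (fun i => ind i * sq i) = sq from funext hindsq]
end Helpers3

section Helpers4
variable {a b m : ℕ}

theorem conj_entry2 (E Z : Matrix (Fin m) (Fin m) ℝ) (i j : Fin m) :
    (Eᵀ * Z * E) i j = (fun k => E k i) ⬝ᵥ (Z *ᵥ (fun k => E k j)) := by
  simp only [Matrix.mul_apply, Matrix.transpose_apply, dotProduct, Matrix.mulVec,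
    Finset.sum_mul, Finset.mul_sum]
  rw [Finset.sum_comm]
  exact Finset.sum_congr rfl fun y _ => Finset.sum_congr rfl fun x _ => by ring

theorem dot_mulVec_pair (M : Matrix (Fin a) (Fin b) ℝ) (x y : Fin b → ℝ) :
    (M *ᵥ x) ⬝ᵥ (M *ᵥ y) = x ⬝ᵥ ((Mᵀ * M) *ᵥ y) := by
  rw [← Matrix.mulVec_mulVec, dot_mulVec_left Mᵀ x (M *ᵥ y), Matrix.transpose_transpose]

theorem col_mul (M F : Matrix (Fin m) (Fin m) ℝ) (i : Fin m) :
    (fun k => (M * F) k i) = M *ᵥ (fun k => F k i) := by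
  funext k
  simp [Matrix.mul_apply, Matrix.mulVec, dotProduct]

theorem trace_as_cols (B A : Matrix (Fin m) (Fin m) ℝ) :
    (Bᵀ * A).trace = ∑ i, (fun k => B k i) ⬝ᵥ (fun k => A k i) := by
  simp [Matrix.trace, Matrix.diag, Matrix.mul_apply, dotProduct, Matrix.transpose_apply]

theorem es_inner_eq_dot {k : ℕ} (x y : EuclideanSpace ℝ (Fin k)) :
    (inner ℝ x y : ℝ) = (fun i => x i) ⬝ᵥ (fun i => y i) := by
  simp [PiLp.inner_apply, RCLike.inner_apply, dotProduct, mul_comm]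

/-- Choice of the optimal rotation: for any `M` and any contraction `C`,
some orthogonal `R` satisfies `tr(C M) ≤ tr(Rᵀ M)`. -/
theorem exists_rot {d : ℕ} (M C : Matrix (Fin d) (Fin d) ℝ) (hC : IsContr C) :
    ∃ R, R ∈ Matrix.orthogonalGroup (Fin d) ℝ ∧ (C * M).trace ≤ (Rᵀ * M).trace := by
  set Z := Mᵀ * M with hZdef
  have hZs : Zᵀ = Z := by rw [hZdef, Matrix.transpose_mul, Matrix.transpose_transpose]
  obtain ⟨F, mu, hF1, hF2, hZ⟩ := spectral_real Z hZs
  have hdiagZ : Fᵀ * Z * F = Matrix.diagonal mu := conj_diag F Z hF2 mu hZ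
  set e : Fin d → (Fin d → ℝ) := fun i => (fun k => F k i) with hedef
  have key : ∀ i j, (M *ᵥ e i) ⬝ᵥ (M *ᵥ e j) = Matrix.diagonal mu i j := by
    intro i j
    rw [dot_mulVec_pair, ← hZdef, ← conj_entry2, hdiagZ]
  have hmu_nonneg : ∀ i, 0 ≤ mu i := by
    intro i
    have := key i i
    simp only [Matrix.diagonal_apply_eq] at this
    rw [← this]
    exact dot_self_nonneg' _
  have Me_zero : ∀ i, mu i = 0 → M *ᵥ e i = 0 := by
    intro i hi
    have h0 : (M *ᵥ e i) ⬝ᵥ (M *ᵥ e i) = 0 := by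
      rw [key i i]; simp [hi]
    funext k
    have := (Finset.sum_eq_zero_iff_of_nonneg
      (fun k (_ : k ∈ Finset.univ) => mul_self_nonneg ((M *ᵥ e i) k))).mp h0 k (Finset.mem_univ k)
    exact mul_self_eq_zero.mp this
  have he_unit : ∀ i, e i ⬝ᵥ e i = 1 := by
    intro i
    have h1 : (Fᵀ * F) i i = e i ⬝ᵥ e i := by
      simp [Matrix.mul_apply, dotProduct, Matrix.transpose_apply, hedef]
    rw [← h1, hF2]
    simp
  set v : Fin d → EuclideanSpace ℝ (Fin d) :=
    fun i => WithLp.toLp 2 ((Real.sqrt (mu i))⁻¹ • (M *ᵥ e i)) with hvdef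
  have hvfun : ∀ i, (fun k => v i k) = fun k => (Real.sqrt (mu i))⁻¹ * (M *ᵥ e i) k := by
    intro i; funext k; rfl
  have vdot : ∀ i j, (fun k => v i k) ⬝ᵥ (fun k => v j k)
      = (Real.sqrt (mu i))⁻¹ * ((Real.sqrt (mu j))⁻¹ * Matrix.diagonal mu i j) := by
    intro i j
    rw [hvfun i, hvfun j]
    have : (fun k => (Real.sqrt (mu i))⁻¹ * (M *ᵥ e i) k) ⬝ᵥ
        (fun k => (Real.sqrt (mu j))⁻¹ * (M *ᵥ e j) k)
        = (Real.sqrt (mu i))⁻¹ * ((Real.sqrt (mu j))⁻¹ * ((M *ᵥ e i) ⬝ᵥ (M *ᵥ e j))) := by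
      simp [dotProduct, Finset.mul_sum]
      exact Finset.sum_congr rfl fun k _ => by ring
    rw [this, key i j]
  have hsqrt_ne : ∀ i, mu i ≠ 0 → Real.sqrt (mu i) ≠ 0 := fun i hi =>
    ne_of_gt (Real.sqrt_pos.mpr (lt_of_le_of_ne (hmu_nonneg i) (Ne.symm hi)))
  have vdot_self : ∀ i, mu i ≠ 0 → (fun k => v i k) ⬝ᵥ (fun k => v i k) = 1 := by
    intro i hi
    rw [vdot i i]
    simp only [Matrix.diagonal_apply_eq]
    have hs : Real.sqrt (mu i) * Real.sqrt (mu i) = mu i := Real.mul_self_sqrt (hmu_nonneg i)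
    have h9 : (Real.sqrt (mu i))⁻¹ * ((Real.sqrt (mu i))⁻¹ * mu i)
        = (Real.sqrt (mu i) * Real.sqrt (mu i))⁻¹ * mu i := by ring
    rw [h9, hs, inv_mul_cancel₀ hi]
  set s : Set (Fin d) := {i | mu i ≠ 0} with hsdef
  have horth : Orthonormal ℝ (s.restrict v) := by
    rw [orthonormal_iff_ite]
    rintro ⟨i, hi⟩ ⟨j, hj⟩
    rw [es_inner_eq_dot]
    simp only [Set.restrict_apply]
    show (fun k => v i k) ⬝ᵥ (fun k => v j k) = _
    rw [vdot i j]
    by_cases h : (⟨i, hi⟩ : s) = ⟨j, hj⟩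
    · have hij : i = j := congrArg Subtype.val h
      subst hij
      rw [if_pos h]
      simp only [Matrix.diagonal_apply_eq]
      have hs' : Real.sqrt (mu i) * Real.sqrt (mu i) = mu i := Real.mul_self_sqrt (hmu_nonneg i)
      have h9 : (Real.sqrt (mu i))⁻¹ * ((Real.sqrt (mu i))⁻¹ * mu i)
          = (Real.sqrt (mu i) * Real.sqrt (mu i))⁻¹ * mu i := by ring
      rw [h9, hs', inv_mul_cancel₀ hi]
    · have hij : i ≠ j := fun hh => h (Subtype.ext hh)
      rw [if_neg h, Matrix.diagonal_apply_ne _ hij]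
      ring
  have hcard : Module.finrank ℝ (EuclideanSpace ℝ (Fin d)) = Fintype.card (Fin d) := by
    rw [finrank_euclideanSpace_fin, Fintype.card_fin]
  obtain ⟨bb, hbb⟩ := horth.exists_orthonormalBasis_extension_of_card_eq hcard
  set B : Matrix (Fin d) (Fin d) ℝ := Matrix.of (fun k i => bb i k) with hBdef
  have hBtB : Bᵀ * B = 1 := by
    ext i j
    have h1 : (Bᵀ * B) i j = (fun k => bb i k) ⬝ᵥ (fun k => bb j k) := by
      simp [Matrix.mul_apply, dotProduct, Matrix.transpose_apply, hBdef]
    rw [h1, ← es_inner_eq_dot]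
    have := (orthonormal_iff_ite.mp bb.orthonormal) i j
    rw [this, Matrix.one_apply]
  have hBBt : B * Bᵀ = 1 := mul_eq_one_comm.mp hBtB
  refine ⟨B * Fᵀ, ?_, ?_⟩
  · rw [Matrix.mem_orthogonalGroup_iff, Matrix.transpose_mul,
      Matrix.transpose_transpose]
    calc B * Fᵀ * (F * Bᵀ) = B * (Fᵀ * F) * Bᵀ := by simp only [Matrix.mul_assoc]
      _ = 1 := by rw [hF2, Matrix.mul_one, hBBt]
  · -- trace bound
    have hMvei : ∀ i, mu i ≠ 0 → M *ᵥ e i = fun k => Real.sqrt (mu i) * v i k := by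
      intro i hi
      have hvk : ∀ k, v i k = (Real.sqrt (mu i))⁻¹ * (M *ᵥ e i) k := fun k => rfl
      funext k
      rw [hvk k, ← mul_assoc, mul_inv_cancel₀ (hsqrt_ne i hi), one_mul]
    -- RHS trace
    have hRt : (B * Fᵀ)ᵀ = F * Bᵀ := by
      rw [Matrix.transpose_mul, Matrix.transpose_transpose]
    have htrR : ((B * Fᵀ)ᵀ * M).trace = ∑ i, Real.sqrt (mu i) := by
      rw [hRt, Matrix.trace_mul_cycle, Matrix.trace_mul_comm]
      have h2 : (Bᵀ * (M * F)).trace = ∑ i, (fun k => B k i) ⬝ᵥ (fun k => (M * F) k i) :=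
        trace_as_cols B (M * F)
      rw [h2]
      refine Finset.sum_congr rfl fun i _ => ?_
      rw [col_mul M F i]
      by_cases hi : mu i = 0
      · rw [show M *ᵥ (fun k => F k i) = M *ᵥ e i from rfl, Me_zero i hi]
        simp [hi]
      · rw [show M *ᵥ (fun k => F k i) = M *ᵥ e i from rfl, hMvei i hi]
        have hcol : (fun k => B k i) = fun k => bb i k := by funext k; rfl
        rw [hcol]
        have hbi : bb i = v i := hbb i hi
        have h4 : (fun k => bb i k) ⬝ᵥ (fun k => Real.sqrt (mu i) * v i k)
            = Real.sqrt (mu i) * ((fun k => v i k) ⬝ᵥ (fun k => v i k)) := by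
          rw [hbi]
          simp [dotProduct, Finset.mul_sum]
          exact Finset.sum_congr rfl fun k _ => by ring
        rw [h4, vdot_self i hi, mul_one]
    rw [htrR]
    -- LHS trace
    have htrC : (C * M).trace = ∑ i, e i ⬝ᵥ ((C * M) *ᵥ e i) := by
      have h5 : (C * M).trace = (Fᵀ * (C * M) * F).trace := by
        rw [Matrix.trace_mul_cycle, ← Matrix.mul_assoc, hF1, Matrix.one_mul]
      rw [h5]
      simp only [Matrix.trace, Matrix.diag]
      exact Finset.sum_congr rfl fun i _ => conj_entry (F) (C * M) i
    rw [htrC]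
    refine Finset.sum_le_sum fun i _ => ?_
    rw [← Matrix.mulVec_mulVec]
    by_cases hi : mu i = 0
    · rw [Me_zero i hi]
      simp [Real.sqrt_nonneg]
    · rw [hMvei i hi]
      have h6 : C *ᵥ (fun k => Real.sqrt (mu i) * v i k)
          = fun k => Real.sqrt (mu i) * (C *ᵥ (fun k' => v i k')) k := by
        have : (fun k => Real.sqrt (mu i) * v i k) = Real.sqrt (mu i) • (fun k => v i k) := by
          funext k; simp [Pi.smul_apply, smul_eq_mul]
        rw [this, Matrix.mulVec_smul]
        funext k; simp
      rw [h6]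
      have h7 : e i ⬝ᵥ (fun k => Real.sqrt (mu i) * (C *ᵥ (fun k' => v i k')) k)
          = Real.sqrt (mu i) * (e i ⬝ᵥ (C *ᵥ (fun k' => v i k'))) := by
        simp [dotProduct, Finset.mul_sum]
        exact Finset.sum_congr rfl fun k _ => by ring
      rw [h7]
      have hbound : e i ⬝ᵥ (C *ᵥ (fun k' => v i k')) ≤ 1 := by
        have hcs := dot_sq_le' (e i) (C *ᵥ (fun k' => v i k'))
        have hcv := hC (fun k' => v i k')
        rw [vdot_self i hi] at hcv
        rw [he_unit i] at hcs
        have h8 : (e i ⬝ᵥ (C *ᵥ fun k' => v i k'))^2 ≤ 1 := by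
          calc (e i ⬝ᵥ (C *ᵥ fun k' => v i k'))^2
              ≤ 1 * ((C *ᵥ fun k' => v i k') ⬝ᵥ (C *ᵥ fun k' => v i k')) := hcs
            _ ≤ 1 := by rw [one_mul]; exact hcv
        nlinarith [h8]
      calc Real.sqrt (mu i) * (e i ⬝ᵥ (C *ᵥ fun k' => v i k'))
          ≤ Real.sqrt (mu i) * 1 := by
            exact mul_le_mul_of_nonneg_left hbound (Real.sqrt_nonneg _)
        _ = Real.sqrt (mu i) := mul_one _
end Helpers4

section Helpers5

theorem frob_sum {d n : ℕ} (A : Matrix (Fin d) (Fin n) ℝ) :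
    (Aᵀ * A).trace = ∑ j, ∑ k, (A k j)^2 := by
  simp [Matrix.trace, Matrix.diag, Matrix.mul_apply, Matrix.transpose_apply, pow_two]

theorem gram_stable {d n : ℕ} (U V : Matrix (Fin d) (Fin n) ℝ) :
    ∃ R, R ∈ Matrix.orthogonalGroup (Fin d) ℝ ∧
      ∑ j, ∑ k, (U k j - (R * V) k j)^2 ≤ ∑ i, ∑ j, |(Uᵀ * U - Vᵀ * V) i j| := by
  obtain ⟨H, W1, hHs, hHpos, hHH, hW1H, hW1c, hW1abs⟩ := factor U
  obtain ⟨K, W2, hKs, hKpos, hKK, hW2K, hW2c, hW2abs⟩ := factor V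
  set C := W2 * W1ᵀ with hCdef
  have hCc : IsContr C := hW2c.mul hW1c.transpose
  set M := U * Vᵀ with hMdef
  obtain ⟨R, hR, htr⟩ := exists_rot M C hCc
  have hRRt : R * Rᵀ = 1 := by
    have := (Matrix.mem_orthogonalGroup_iff _ _).mp hR
    exact this
  have hRtR : Rᵀ * R = 1 := mul_eq_one_comm.mp hRRt
  refine ⟨R, hR, ?_⟩
  -- expansion of the Frobenius norm
  have hAt : (U - R*V)ᵀ * (U - R*V)
      = Uᵀ*U - Uᵀ*(R*V) - ((R*V)ᵀ*U - (R*V)ᵀ*(R*V)) := by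
    rw [Matrix.transpose_sub, Matrix.sub_mul, Matrix.mul_sub, Matrix.mul_sub]
  have hRVRV : (R*V)ᵀ*(R*V) = Vᵀ*V := by
    rw [Matrix.transpose_mul]
    calc Vᵀ*Rᵀ*(R*V) = Vᵀ*(Rᵀ*R)*V := by simp only [Matrix.mul_assoc]
      _ = Vᵀ*V := by rw [hRtR, Matrix.mul_one]
  have hcross1 : (Uᵀ*(R*V)).trace = (Rᵀ*M).trace := by
    rw [hMdef]
    have h1 : (Rᵀ*(U*Vᵀ)).trace = (Vᵀ*(Rᵀ*U)).trace := by
      rw [Matrix.trace_mul_comm, Matrix.mul_assoc, Matrix.trace_mul_comm, Matrix.mul_assoc]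
    have h2 : (Vᵀ*(Rᵀ*U))ᵀ = Uᵀ*(R*V) := by
      rw [Matrix.transpose_mul, Matrix.transpose_mul, Matrix.transpose_transpose,
        Matrix.transpose_transpose, Matrix.mul_assoc]
    have h3 : (Vᵀ*(Rᵀ*U)).trace = (Uᵀ*(R*V)).trace := by
      rw [← Matrix.trace_transpose (Vᵀ*(Rᵀ*U)), h2]
    rw [h1, h3]
  have hcross2 : ((R*V)ᵀ*U).trace = (Rᵀ*M).trace := by
    rw [hMdef, Matrix.transpose_mul]
    calc (Vᵀ*Rᵀ*U).trace = (Rᵀ*U*Vᵀ).trace := by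
          rw [← Matrix.trace_mul_cycle]
      _ = (Rᵀ*(U*Vᵀ)).trace := by rw [Matrix.mul_assoc]
  have hexp : ((U - R*V)ᵀ * (U - R*V)).trace
      = (Uᵀ*U).trace + (Vᵀ*V).trace - 2*(Rᵀ*M).trace := by
    rw [hAt, Matrix.trace_sub, Matrix.trace_sub, Matrix.trace_sub, hRVRV, hcross1, hcross2]
    ring
  -- tr(C*M) = tr(H*K)
  have hVt : Vᵀ = K * W2ᵀ := by
    rw [← hW2K, Matrix.transpose_mul, hKs]
  have hKW2 : K * (W2ᵀ * W2) = K := by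
    have h4 := congrArg Matrix.transpose hW2abs
    rw [Matrix.transpose_mul, Matrix.transpose_mul, hKs, Matrix.transpose_transpose,
      ← Matrix.mul_assoc] at h4
    rw [← Matrix.mul_assoc]
    exact h4
  have hCM : (C*M).trace = (H*K).trace := by
    rw [hCdef, hMdef, ← hW1H, hVt]
    have h5 : W2 * W1ᵀ * (W1 * H * (K * W2ᵀ)) = W2 * ((W1ᵀ * W1 * H) * (K * W2ᵀ)) := by
      simp only [Matrix.mul_assoc]
    rw [h5, hW1abs]
    have h6 : W2 * (H * (K * W2ᵀ)) = W2 * (H * K) * W2ᵀ := by simp only [Matrix.mul_assoc]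
    rw [h6, Matrix.trace_mul_cycle, ← Matrix.mul_assoc, Matrix.mul_assoc,
      Matrix.trace_mul_comm, Matrix.mul_assoc, hKW2]
  -- tr((H-K)²)
  have hHK : ((H - K) * (H - K)).trace
      = (Uᵀ*U).trace + (Vᵀ*V).trace - 2*(H*K).trace := by
    have h7 : (H - K) * (H - K) = H*H - H*K - (K*H - K*K) := by
      rw [Matrix.sub_mul, Matrix.mul_sub, Matrix.mul_sub]
    rw [h7, Matrix.trace_sub, Matrix.trace_sub, Matrix.trace_sub, hHH, hKK,
      Matrix.trace_mul_comm K H]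
    ring
  have hPS := powers_stormer H K hHs hKs hHpos hKpos
  rw [hHH, hKK] at hPS
  calc ∑ j, ∑ k, (U k j - (R*V) k j)^2
      = ((U - R*V)ᵀ * (U - R*V)).trace := by
        rw [frob_sum]
        exact Finset.sum_congr rfl fun j _ => Finset.sum_congr rfl fun k _ => by
          rw [Matrix.sub_apply]
    _ = (Uᵀ*U).trace + (Vᵀ*V).trace - 2*(Rᵀ*M).trace := hexp
    _ ≤ (Uᵀ*U).trace + (Vᵀ*V).trace - 2*(C*M).trace := by linarith
    _ = (Uᵀ*U).trace + (Vᵀ*V).trace - 2*(H*K).trace := by rw [hCM]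
    _ = ((H - K) * (H - K)).trace := hHK.symm
    _ ≤ ∑ i, ∑ j, |(Uᵀ * U - Vᵀ * V) i j| := hPS
end Helpers5

section Final

theorem colDist_sq {d n : ℕ} (X : Matrix (Fin d) (Fin n) ℝ) (i j : Fin n) :
    (colDist X i j)^2 = ∑ k, (X k i - X k j)^2 :=
  Real.sq_sqrt (Finset.sum_nonneg fun k _ => sq_nonneg _)

theorem colDist_nonneg {d n : ℕ} (X : Matrix (Fin d) (Fin n) ℝ) (i j : Fin n) :
    0 ≤ colDist X i j := Real.sqrt_nonneg _

theorem colDist_le_two {d n : ℕ} (X : Matrix (Fin d) (Fin n) ℝ)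
    (hX : ∀ j, Real.sqrt (∑ k, (X k j)^2) ≤ 1) (i j : Fin n) : colDist X i j ≤ 2 := by
  set u : EuclideanSpace ℝ (Fin d) := WithLp.toLp 2 (fun k => X k i) with hu
  set v : EuclideanSpace ℝ (Fin d) := WithLp.toLp 2 (fun k => X k j) with hv
  have hnu : ‖u‖ = Real.sqrt (∑ k, (X k i)^2) := by
    rw [EuclideanSpace.norm_eq]
    congr 1
    exact Finset.sum_congr rfl fun k _ => by rw [Real.norm_eq_abs, sq_abs]
  have hnv : ‖v‖ = Real.sqrt (∑ k, (X k j)^2) := by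
    rw [EuclideanSpace.norm_eq]
    congr 1
    exact Finset.sum_congr rfl fun k _ => by rw [Real.norm_eq_abs, sq_abs]
  have huv : colDist X i j = ‖u - v‖ := by
    rw [EuclideanSpace.norm_eq, colDist]
    congr 1
    refine Finset.sum_congr rfl fun k _ => ?_
    rw [Real.norm_eq_abs, sq_abs]
    congr 1
  rw [huv]
  calc ‖u - v‖ ≤ ‖u‖ + ‖v‖ := norm_sub_le _ _
    _ ≤ 2 := by rw [hnu, hnv]; linarith [hX i, hX j]

theorem sq_diff_bound {p q : ℝ} (hp0 : 0 ≤ p) (hp2 : p ≤ 2) (hq0 : 0 ≤ q) (hq2 : q ≤ 2) :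
    |p^2 - q^2| ≤ 4 * |p - q| := by
  rw [show p^2 - q^2 = (p+q)*(p-q) by ring, abs_mul]
  have h1 : |p + q| ≤ 4 := abs_le.mpr ⟨by linarith, by linarith⟩
  exact mul_le_mul_of_nonneg_right h1 (abs_nonneg _)

theorem gram_entry {d n : ℕ} (X : Matrix (Fin d) (Fin n) ℝ) (i0 i j : Fin n) :
    ((Matrix.of (fun k l => X k l - X k i0))ᵀ * (Matrix.of (fun k l => X k l - X k i0))) i j
      = ((colDist X i i0)^2 + (colDist X j i0)^2 - (colDist X i j)^2)/2 := by
  rw [colDist_sq, colDist_sq, colDist_sq]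
  simp only [Matrix.mul_apply, Matrix.transpose_apply, Matrix.of_apply]
  rw [← Finset.sum_add_distrib, ← Finset.sum_sub_distrib, Finset.sum_div]
  exact Finset.sum_congr rfl fun k _ => by ring

theorem dG_sq_le_dD' {d n : ℕ} (X Y : Matrix (Fin d) (Fin n) ℝ)
    (hX : ∀ j, Real.sqrt (∑ k, (X k j)^2) ≤ 1)
    (hY : ∀ j, Real.sqrt (∑ k, (Y k j)^2) ≤ 1) :
    dG X Y ^ 2 ≤ (4 * (n : ℝ) + 2) * dD X Y := by
  have hdG0 : 0 ≤ dG X Y :=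
    Real.iInf_nonneg fun π => Real.iInf_nonneg fun R' => Real.iInf_nonneg fun t =>
      Real.sqrt_nonneg _
  rcases Nat.eq_zero_or_pos n with hn | hn
  · subst hn
    have h1 : dD X Y = 0 := by simp [dD, ciInf_const]
    have h2 : dG X Y = 0 := by simp [dG, ciInf_const, Real.sqrt_zero]
    rw [h1, h2]
    norm_num
  set i0 : Fin n := ⟨0, hn⟩ with hi0
  -- the minimizing permutation
  obtain ⟨π₀, hπ₀⟩ := Finite.exists_min
    (fun π : Equiv.Perm (Fin n) => ∑ i, ∑ j, |colDist X i j - colDist Y (π i) (π j)|)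
  set ε := ∑ i, ∑ j, |colDist X i j - colDist Y (π₀ i) (π₀ j)| with hεdef
  have hε0 : 0 ≤ ε :=
    Finset.sum_nonneg fun i _ => Finset.sum_nonneg fun j _ => abs_nonneg _
  have hdD_eq : dD X Y = ε := by
    refine le_antisymm (ciInf_le ⟨0, ?_⟩ π₀) (le_ciInf hπ₀)
    rintro x ⟨π, rfl⟩
    exact Finset.sum_nonneg fun i _ => Finset.sum_nonneg fun j _ => abs_nonneg _
  -- centered (base-point) configurations
  set Y' : Matrix (Fin d) (Fin n) ℝ := Matrix.of (fun k l => Y k (π₀ l)) with hY'def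
  have hY'cols : ∀ j, Real.sqrt (∑ k, (Y' k j)^2) ≤ 1 := fun j => hY (π₀ j)
  have hY'dist : ∀ i j, colDist Y' i j = colDist Y (π₀ i) (π₀ j) := fun i j => rfl
  set U : Matrix (Fin d) (Fin n) ℝ := Matrix.of (fun k l => X k l - X k i0) with hUdef
  set V : Matrix (Fin d) (Fin n) ℝ := Matrix.of (fun k l => Y' k l - Y' k i0) with hVdef
  set δ : Fin n → Fin n → ℝ :=
    fun i j => |colDist X i j - colDist Y (π₀ i) (π₀ j)| with hδdef
  have hδnn : ∀ i j, 0 ≤ δ i j := fun i j => abs_nonneg _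
  -- entrywise Gram bound
  have hentry : ∀ i j, |(Uᵀ * U - Vᵀ * V) i j| ≤ 2 * (δ i i0 + δ j i0 + δ i j) := by
    intro i j
    have hU : (Uᵀ * U) i j
        = ((colDist X i i0)^2 + (colDist X j i0)^2 - (colDist X i j)^2)/2 :=
      gram_entry X i0 i j
    have hV : (Vᵀ * V) i j
        = ((colDist Y' i i0)^2 + (colDist Y' j i0)^2 - (colDist Y' i j)^2)/2 :=
      gram_entry Y' i0 i j
    have e1 : |(colDist X i i0)^2 - (colDist Y' i i0)^2| ≤ 4 * δ i i0 := by
      rw [hδdef]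
      simp only [hY'dist]
      exact sq_diff_bound (colDist_nonneg _ _ _) (colDist_le_two X hX _ _)
        (colDist_nonneg _ _ _) (colDist_le_two Y' hY'cols _ _)
    have e2 : |(colDist X j i0)^2 - (colDist Y' j i0)^2| ≤ 4 * δ j i0 := by
      rw [hδdef]
      simp only [hY'dist]
      exact sq_diff_bound (colDist_nonneg _ _ _) (colDist_le_two X hX _ _)
        (colDist_nonneg _ _ _) (colDist_le_two Y' hY'cols _ _)
    have e3 : |(colDist X i j)^2 - (colDist Y' i j)^2| ≤ 4 * δ i j := by
      rw [hδdef]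
      simp only [hY'dist]
      exact sq_diff_bound (colDist_nonneg _ _ _) (colDist_le_two X hX _ _)
        (colDist_nonneg _ _ _) (colDist_le_two Y' hY'cols _ _)
    have habc : ∀ a b c : ℝ, |a + b - c| ≤ |a| + |b| + |c| := by
      intro a b c
      calc |a + b - c| ≤ |a + b| + |c| := abs_sub _ _
        _ ≤ |a| + |b| + |c| := by linarith [abs_add_le a b]
    rw [Matrix.sub_apply, hU, hV]
    rw [div_sub_div_same]
    rw [show (colDist X i i0)^2 + (colDist X j i0)^2 - (colDist X i j)^2 -
        ((colDist Y' i i0)^2 + (colDist Y' j i0)^2 - (colDist Y' i j)^2)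
        = ((colDist X i i0)^2 - (colDist Y' i i0)^2) +
          ((colDist X j i0)^2 - (colDist Y' j i0)^2) -
          ((colDist X i j)^2 - (colDist Y' i j)^2) from by ring]
    rw [abs_div]
    have habs2 : |(2:ℝ)| = 2 := by norm_num
    rw [habs2]
    have := habc ((colDist X i i0)^2 - (colDist Y' i i0)^2)
      ((colDist X j i0)^2 - (colDist Y' j i0)^2)
      ((colDist X i j)^2 - (colDist Y' i j)^2)
    linarith
  -- summed Gram bound
  have hsum1 : ∑ i, δ i i0 ≤ ε := by
    rw [hεdef]
    refine Finset.sum_le_sum fun i _ => ?_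
    exact Finset.single_le_sum (fun j (_ : j ∈ Finset.univ) => hδnn i j) (Finset.mem_univ i0)
  have key0 : ∑ _i : Fin n, ∑ _j : Fin n, (2:ℝ) * δ _i i0 = 2*(n:ℝ)*(∑ i, δ i i0) := by
    have h1 : ∀ i : Fin n, ∑ _j : Fin n, (2:ℝ) * δ i i0 = (n:ℝ) * (2 * δ i i0) := fun i => by
      rw [Finset.sum_const, Finset.card_univ, Fintype.card_fin, nsmul_eq_mul]
    rw [Finset.sum_congr rfl fun i _ => h1 i, ← Finset.mul_sum, ← Finset.mul_sum]
    ring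
  have key1 : ∑ _i : Fin n, ∑ j : Fin n, (2:ℝ) * δ j i0 = 2*(n:ℝ)*(∑ j, δ j i0) := by
    rw [Finset.sum_const, Finset.card_univ, Fintype.card_fin, nsmul_eq_mul, ← Finset.mul_sum]
    ring
  have key2 : ∑ i : Fin n, ∑ j : Fin n, (2:ℝ) * δ i j = 2*ε := by
    rw [hεdef]
    simp only [← Finset.mul_sum]
    rfl
  have hGram : ∑ i, ∑ j, |(Uᵀ * U - Vᵀ * V) i j| ≤ (4 * (n:ℝ) + 2) * ε := by
    calc ∑ i, ∑ j, |(Uᵀ * U - Vᵀ * V) i j|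
        ≤ ∑ i, ∑ j, ((2:ℝ) * δ i i0 + 2 * δ j i0 + 2 * δ i j) := by
          refine Finset.sum_le_sum fun i _ => Finset.sum_le_sum fun j _ => ?_
          refine le_trans (hentry i j) (le_of_eq (by ring))
      _ = (∑ i : Fin n, ∑ j : Fin n, (2:ℝ) * δ i i0)
            + (∑ i : Fin n, ∑ j : Fin n, (2:ℝ) * δ j i0)
            + (∑ i : Fin n, ∑ j : Fin n, (2:ℝ) * δ i j) := by
          simp only [Finset.sum_add_distrib]
      _ = 2*(n:ℝ)*(∑ i, δ i i0) + 2*(n:ℝ)*(∑ j, δ j i0) + 2*ε := by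
          rw [key0, key1, key2]
      _ ≤ 2*(n:ℝ)*ε + 2*(n:ℝ)*ε + 2*ε := by
          have hn0 : (0:ℝ) ≤ (n:ℝ) := Nat.cast_nonneg n
          have h3 : 2*(n:ℝ)*(∑ i, δ i i0) ≤ 2*(n:ℝ)*ε :=
            mul_le_mul_of_nonneg_left hsum1 (by linarith)
          linarith
      _ = (4 * (n:ℝ) + 2) * ε := by ring
  -- apply the main stability result
  obtain ⟨R, hR, hRle⟩ := gram_stable U V
  set t : Fin d → ℝ := fun k => X k i0 - ∑ l, R k l * Y l (π₀ i0) with htdef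
  set S := ∑ j, ∑ k,
    (X k j - (∑ l, R k l * Y l (π₀ j)) - t k)^2 with hSdef
  have hS0 : 0 ≤ S :=
    Finset.sum_nonneg fun j _ => Finset.sum_nonneg fun k _ => sq_nonneg _
  have hSeq : S = ∑ j, ∑ k, (U k j - (R * V) k j)^2 := by
    refine Finset.sum_congr rfl fun j _ => Finset.sum_congr rfl fun k _ => ?_
    congr 1
    have hRV : (R * V) k j = (∑ l, R k l * Y l (π₀ j)) - (∑ l, R k l * Y l (π₀ i0)) := by
      rw [Matrix.mul_apply, ← Finset.sum_sub_distrib]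
      refine Finset.sum_congr rfl fun l _ => ?_
      have : V l j = Y l (π₀ j) - Y l (π₀ i0) := rfl
      rw [this]; ring
    have hUkj : U k j = X k j - X k i0 := rfl
    rw [hRV, hUkj, htdef]
    ring
  have hstep : dG X Y ≤ Real.sqrt S := by
    have b1 : BddBelow (Set.range fun π : Equiv.Perm (Fin n) =>
        ⨅ R' : {R : Matrix (Fin d) (Fin d) ℝ // R ∈ Matrix.orthogonalGroup (Fin d) ℝ},
          ⨅ t' : Fin d → ℝ, Real.sqrt (∑ j, ∑ k,
            (X k j - (∑ l, (R' : Matrix (Fin d) (Fin d) ℝ) k l * Y l (π j)) - t' k)^2)) := by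
      refine ⟨0, ?_⟩
      rintro x ⟨π, rfl⟩
      exact Real.iInf_nonneg fun R' => Real.iInf_nonneg fun t' => Real.sqrt_nonneg _
    have b2 : BddBelow (Set.range fun R' : {R : Matrix (Fin d) (Fin d) ℝ //
        R ∈ Matrix.orthogonalGroup (Fin d) ℝ} =>
          ⨅ t' : Fin d → ℝ, Real.sqrt (∑ j, ∑ k,
            (X k j - (∑ l, (R' : Matrix (Fin d) (Fin d) ℝ) k l * Y l (π₀ j)) - t' k)^2)) := by
      refine ⟨0, ?_⟩
      rintro x ⟨R', rfl⟩
      exact Real.iInf_nonneg fun t' => Real.sqrt_nonneg _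
    have b3 : BddBelow (Set.range fun t' : Fin d → ℝ => Real.sqrt (∑ j, ∑ k,
        (X k j - (∑ l, R k l * Y l (π₀ j)) - t' k)^2)) := by
      refine ⟨0, ?_⟩
      rintro x ⟨t', rfl⟩
      exact Real.sqrt_nonneg _
    calc dG X Y
        ≤ ⨅ R' : {R : Matrix (Fin d) (Fin d) ℝ // R ∈ Matrix.orthogonalGroup (Fin d) ℝ},
            ⨅ t' : Fin d → ℝ, Real.sqrt (∑ j, ∑ k,
              (X k j - (∑ l, (R' : Matrix (Fin d) (Fin d) ℝ) k l * Y l (π₀ j)) - t' k)^2) :=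
          ciInf_le b1 π₀
      _ ≤ ⨅ t' : Fin d → ℝ, Real.sqrt (∑ j, ∑ k,
              (X k j - (∑ l, R k l * Y l (π₀ j)) - t' k)^2) := ciInf_le b2 ⟨R, hR⟩
      _ ≤ Real.sqrt S := ciInf_le b3 t
  calc dG X Y ^ 2 ≤ (Real.sqrt S)^2 := pow_le_pow_left₀ hdG0 hstep 2
    _ = S := Real.sq_sqrt hS0
    _ ≤ (4 * (n:ℝ) + 2) * ε := by
        rw [hSeq]
        exact le_trans hRle hGram
    _ = (4 * (n:ℝ) + 2) * dD X Y := by rw [hdD_eq]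
end Final

theorem dG_sq_le_dD {d n : ℕ} (X Y : Matrix (Fin d) (Fin n) ℝ)
    (hX : ∀ j, Real.sqrt (∑ k, (X k j)^2) ≤ 1)
    (hY : ∀ j, Real.sqrt (∑ k, (Y k j)^2) ≤ 1) :
    dG X Y ^ 2 ≤ (4 * (n : ℝ) + 2) * dD X Y :=
  dG_sq_le_dD' X Y hX hY
end

section
/- For any two positive semidefinite matrices G1, G2 of the same size, ‖√G1 - √G2‖_F² ≤ ‖G1 - G2‖_T, where √ denotes the positive semidefinite square root, ‖·‖_F the Frobenius norm and ‖·‖_T the trace (nuclear) norm. -/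
/-- The positive semidefinite square root of a positive semidefinite matrix
(as defined in the older Mathlib, removed since). -/
noncomputable def Matrix.PosSemidef.sqrt {n : Type*} [Fintype n] [DecidableEq n]
    {A : Matrix n n ℝ} (hA : A.PosSemidef) : Matrix n n ℝ :=
  hA.1.eigenvectorUnitary.1 * Matrix.diagonal ((√·) ∘ hA.1.eigenvalues) *
  (star hA.1.eigenvectorUnitary : Matrix n n ℝ)

/-- Nuclear (trace) norm: trace of the PSD square root of `Aᴴ * A`,
i.e. the sum of the singular values of `A`. -/
noncomputable def nuclearNorm {n : ℕ} (A : Matrix (Fin n) (Fin n) ℝ) : ℝ :=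
  (Matrix.posSemidef_conjTranspose_mul_self A).sqrt.trace

open Matrix Finset

open scoped MatrixOrder in
private lemma Matrix.PosSemidef.sqrt_eq_cfc {n : ℕ} {A : Matrix (Fin n) (Fin n) ℝ}
    (hA : A.PosSemidef) : hA.sqrt = CFC.sqrt A := by
  rw [CFC.sqrt_eq_cfc, cfc_nnreal_eq_real _ A, hA.1.cfc_eq, IsHermitian.cfc,
    Unitary.conjStarAlgAut_apply, Matrix.PosSemidef.sqrt]
  congr 2
  ext i j
  simp only [diagonal_apply, Function.comp_apply, RCLike.ofReal_real_eq_id, id,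
    Real.coe_sqrt, Real.coe_toNNReal']
  rw [max_eq_left (hA.eigenvalues_nonneg i)]

open scoped MatrixOrder in
private lemma Matrix.PosSemidef.posSemidef_sqrt {n : ℕ} {A : Matrix (Fin n) (Fin n) ℝ}
    (hA : A.PosSemidef) : hA.sqrt.PosSemidef := by
  rw [hA.sqrt_eq_cfc]
  exact Matrix.nonneg_iff_posSemidef.mp (CFC.sqrt_nonneg A)

open scoped MatrixOrder in
private lemma Matrix.PosSemidef.sqrt_mul_self {n : ℕ} {A : Matrix (Fin n) (Fin n) ℝ}
    (hA : A.PosSemidef) : hA.sqrt * hA.sqrt = A := by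
  rw [hA.sqrt_eq_cfc]
  exact CFC.sqrt_mul_sqrt_self A (Matrix.nonneg_iff_posSemidef.mpr hA)

open scoped MatrixOrder in
private lemma Matrix.PosSemidef.eq_sqrt_of_sq_eq {n : ℕ} {A B : Matrix (Fin n) (Fin n) ℝ}
    (hB : B.PosSemidef) (hA : A.PosSemidef) (h : B ^ 2 = A) : B = hA.sqrt := by
  rw [hA.sqrt_eq_cfc]
  exact (CFC.sqrt_unique (by rw [← sq]; exact h) (Matrix.nonneg_iff_posSemidef.mpr hB)).symm

private lemma ofReal_comp_eq {n : ℕ} (f : Fin n → ℝ) :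
    (RCLike.ofReal ∘ f : Fin n → ℝ) = f := by
  ext i; simp

private lemma psd_diag_nonneg {n : ℕ} {M : Matrix (Fin n) (Fin n) ℝ} (hM : M.PosSemidef)
    (i : Fin n) : 0 ≤ M i i := by
  exact hM.diag_nonneg

private lemma conj_diag_mul {n : ℕ} {V : Matrix (Fin n) (Fin n) ℝ} (hV : star V * V = 1)
    (d e : Fin n → ℝ) :
    (V * diagonal d * star V) * (V * diagonal e * star V)
      = V * diagonal (fun i => d i * e i) * star V := by
  have h : (V * diagonal d * star V) * (V * diagonal e * star V)
      = V * (diagonal d * (star V * V) * diagonal e) * star V := by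
    noncomm_ring
  rw [h, hV, mul_one, diagonal_mul_diagonal]

private lemma trace_conj_diag {n : ℕ} {V : Matrix (Fin n) (Fin n) ℝ} (hV : star V * V = 1)
    (d : Fin n → ℝ) : (V * diagonal d * star V).trace = ∑ i, d i := by
  rw [trace_mul_cycle, hV, one_mul, trace_diagonal]

/-- For a real symmetric matrix, the nuclear norm is the sum of the absolute values of
the eigenvalues. -/
private lemma nuclearNorm_isHermitian {n : ℕ} {C : Matrix (Fin n) (Fin n) ℝ}
    (hC : C.IsHermitian) : nuclearNorm C = ∑ i, |hC.eigenvalues i| := by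
  set V : Matrix (Fin n) (Fin n) ℝ := (hC.eigenvectorUnitary : Matrix (Fin n) (Fin n) ℝ) with hVdef
  have hV : star V * V = 1 := Matrix.mem_unitaryGroup_iff'.mp hC.eigenvectorUnitary.2
  have hspec : C = V * diagonal (fun i => hC.eigenvalues i) * star V := by
    conv_lhs => rw [hC.spectral_theorem, Unitary.conjStarAlgAut_apply]
    rw [ofReal_comp_eq]
  set B : Matrix (Fin n) (Fin n) ℝ :=
    V * diagonal (fun i => |hC.eigenvalues i|) * star V with hBdef
  have hBpsd : B.PosSemidef := by
    rw [hBdef, Matrix.star_eq_conjTranspose]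
    exact (Matrix.posSemidef_diagonal_iff.mpr fun i => abs_nonneg _).mul_mul_conjTranspose_same V
  have hBsq : B ^ 2 = Cᴴ * C := by
    rw [hC.eq, sq, hBdef, conj_diag_mul hV]
    conv_rhs => rw [hspec]
    rw [conj_diag_mul hV]
    have hfun : (fun i => |hC.eigenvalues i| * |hC.eigenvalues i|)
        = fun i => hC.eigenvalues i * hC.eigenvalues i := by
      ext i; exact abs_mul_abs_self _
    rw [hfun]
  have hsqrt : B = (Matrix.posSemidef_conjTranspose_mul_self C).sqrt :=
    hBpsd.eq_sqrt_of_sq_eq (Matrix.posSemidef_conjTranspose_mul_self C) hBsq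
  rw [nuclearNorm, ← hsqrt, hBdef, trace_conj_diag hV]

/-- Sum of the absolute values of the diagonal entries in any orthonormal frame is at most
the nuclear norm. -/
private lemma sum_abs_diag_le {n : ℕ} {C U : Matrix (Fin n) (Fin n) ℝ}
    (hC : C.IsHermitian) (hU : U ∈ Matrix.unitaryGroup (Fin n) ℝ) :
    ∑ i, |(star U * C * U) i i| ≤ nuclearNorm C := by
  set V : Matrix (Fin n) (Fin n) ℝ := (hC.eigenvectorUnitary : Matrix (Fin n) (Fin n) ℝ) with hVdef
  set μ : Fin n → ℝ := hC.eigenvalues with hμdef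
  have hspec : C = V * diagonal μ * star V := by
    conv_lhs => rw [hC.spectral_theorem, Unitary.conjStarAlgAut_apply]
    rw [ofReal_comp_eq]
  set W : Matrix (Fin n) (Fin n) ℝ := star V * U with hWdef
  have hWU : W ∈ Matrix.unitaryGroup (Fin n) ℝ :=
    mul_mem (Unitary.star_mem hC.eigenvectorUnitary.2) hU
  have hWW : W * star W = 1 := Matrix.mem_unitaryGroup_iff.mp hWU
  have hkey : star U * C * U = star W * diagonal μ * W := by
    rw [hspec, hWdef]
    simp only [Matrix.star_mul, star_star]
    noncomm_ring
  have hentry : ∀ i, (star U * C * U) i i = ∑ j, μ j * (W j i)^2 := by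
    intro i
    rw [hkey, Matrix.mul_apply]
    refine Finset.sum_congr rfl fun j _ => ?_
    rw [Matrix.mul_diagonal, Matrix.star_apply, star_trivial]
    ring
  have hrow : ∀ j, ∑ i, (W j i)^2 = 1 := by
    intro j
    have h := congrFun (congrFun hWW j) j
    rw [Matrix.mul_apply] at h
    simp only [Matrix.one_apply_eq] at h
    rw [← h]
    refine Finset.sum_congr rfl fun i _ => ?_
    rw [Matrix.star_apply, star_trivial]; ring
  calc ∑ i, |(star U * C * U) i i|
      ≤ ∑ i, ∑ j, |μ j| * (W j i)^2 := by
        refine Finset.sum_le_sum fun i _ => ?_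
        rw [hentry i]
        refine (Finset.abs_sum_le_sum_abs _ _).trans ?_
        refine Finset.sum_le_sum fun j _ => ?_
        rw [abs_mul, abs_of_nonneg (sq_nonneg (W j i))]
    _ = ∑ j, |μ j| := by
        rw [Finset.sum_comm]
        refine Finset.sum_congr rfl fun j _ => ?_
        rw [← Finset.mul_sum, hrow j, mul_one]
    _ = nuclearNorm C := (nuclearNorm_isHermitian hC).symm

theorem sqrt_psd_frob_sq_le_nuclear {n : ℕ} {G1 G2 : Matrix (Fin n) (Fin n) ℝ}
    (h1 : G1.PosSemidef) (h2 : G2.PosSemidef) :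
    (∑ i, ∑ j, (h1.sqrt i j - h2.sqrt i j)^2) ≤ nuclearNorm (G1 - G2) := by
  have hS : h1.sqrt.PosSemidef := h1.posSemidef_sqrt
  have hT : h2.sqrt.PosSemidef := h2.posSemidef_sqrt
  set S : Matrix (Fin n) (Fin n) ℝ := h1.sqrt with hSdef
  set T : Matrix (Fin n) (Fin n) ℝ := h2.sqrt with hTdef
  set D : Matrix (Fin n) (Fin n) ℝ := S - T with hDdef
  set C : Matrix (Fin n) (Fin n) ℝ := G1 - G2 with hCdef
  set M : Matrix (Fin n) (Fin n) ℝ := S + T with hMdef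
  have hDh : D.IsHermitian := hS.1.sub hT.1
  have hCh : C.IsHermitian := h1.1.sub h2.1
  set U : Matrix (Fin n) (Fin n) ℝ := (hDh.eigenvectorUnitary : Matrix (Fin n) (Fin n) ℝ) with hUdef
  set lam : Fin n → ℝ := hDh.eigenvalues with hlamdef
  have hUmem : U ∈ Matrix.unitaryGroup (Fin n) ℝ := hDh.eigenvectorUnitary.2
  have hUU : star U * U = 1 := Matrix.mem_unitaryGroup_iff'.mp hUmem
  have hspec : D = U * diagonal lam * star U := by
    conv_lhs => rw [hDh.spectral_theorem, Unitary.conjStarAlgAut_apply]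
    rw [ofReal_comp_eq]
  have hdiag : star U * D * U = diagonal lam := by
    rw [hspec]
    calc star U * (U * diagonal lam * star U) * U
        = (star U * U) * diagonal lam * (star U * U) := by noncomm_ring
      _ = diagonal lam := by rw [hUU, one_mul, mul_one]
  have hUD : star U * D = diagonal lam * star U := by
    rw [hspec]
    calc star U * (U * diagonal lam * star U)
        = (star U * U) * diagonal lam * star U := by noncomm_ring
      _ = diagonal lam * star U := by rw [hUU, one_mul]
  have hDU : D * U = U * diagonal lam := by
    rw [hspec]
    calc U * diagonal lam * star U * U
        = U * diagonal lam * (star U * U) := by noncomm_ring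
      _ = U * diagonal lam := by rw [hUU, mul_one]
  -- Step 1 : Frobenius norm squared = sum of squared eigenvalues
  have step1 : (∑ i, ∑ j, (D i j)^2) = ∑ i, (lam i)^2 := by
    have hDsym : ∀ i j, D j i = D i j := by
      intro i j
      have := congrFun (congrFun hDh.eq i) j
      simpa [Matrix.conjTranspose_apply] using this
    have e1 : (∑ i, ∑ j, (D i j)^2) = (D * D).trace := by
      rw [Matrix.trace]
      refine Finset.sum_congr rfl fun i _ => ?_
      rw [Matrix.diag_apply, Matrix.mul_apply]
      refine Finset.sum_congr rfl fun j _ => ?_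
      rw [hDsym i j]; ring
    have e2 : D * D = U * diagonal (fun i => lam i * lam i) * star U := by
      conv_lhs => rw [hspec]
      exact conj_diag_mul hUU lam lam
    rw [e1, e2, trace_conj_diag hUU]
    exact Finset.sum_congr rfl fun i _ => (sq (lam i)).symm
  -- Step 2 : C + C = D * M + M * D
  have step2 : C + C = D * M + M * D := by
    have hSS : S * S = G1 := h1.sqrt_mul_self
    have hTT : T * T = G2 := h2.sqrt_mul_self
    rw [hCdef, hDdef, hMdef, ← hSS, ← hTT]
    noncomm_ring
  -- Step 3 : diagonal entries of conjugated C
  have step3 : ∀ i, (star U * C * U) i i = lam i * (star U * M * U) i i := by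
    intro i
    have hq : star U * C * U + star U * C * U
        = diagonal lam * (star U * M * U) + (star U * M * U) * diagonal lam := by
      calc star U * C * U + star U * C * U
          = star U * (C + C) * U := by noncomm_ring
        _ = star U * (D * M + M * D) * U := by rw [step2]
        _ = (star U * D) * (M * U) + (star U * M) * (D * U) := by noncomm_ring
        _ = (diagonal lam * star U) * (M * U) + (star U * M) * (U * diagonal lam) := by
            rw [hUD, hDU]
        _ = diagonal lam * (star U * M * U) + (star U * M * U) * diagonal lam := by
            noncomm_ring
    have hii := congrFun (congrFun hq i) i
    simp only [Matrix.add_apply, Matrix.diagonal_mul, Matrix.mul_diagonal] at hii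
    linarith
  -- Step 4 : (star U * M * U) i i ≥ |lam i|
  have step4 : ∀ i, |lam i| ≤ (star U * M * U) i i := by
    intro i
    have hMD : (M - D).PosSemidef := by
      have h : M - D = T + T := by rw [hMdef, hDdef]; abel
      rw [h]; exact hT.add hT
    have hMpD : (M + D).PosSemidef := by
      have h : M + D = S + S := by rw [hMdef, hDdef]; abel
      rw [h]; exact hS.add hS
    have c1 : (star U * (M - D) * U).PosSemidef := by
      rw [Matrix.star_eq_conjTranspose]
      exact hMD.conjTranspose_mul_mul_same U
    have c2 : (star U * (M + D) * U).PosSemidef := by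
      rw [Matrix.star_eq_conjTranspose]
      exact hMpD.conjTranspose_mul_mul_same U
    have d1 : star U * (M - D) * U = star U * M * U - diagonal lam := by
      rw [← hdiag]; noncomm_ring
    have d2 : star U * (M + D) * U = star U * M * U + diagonal lam := by
      rw [← hdiag]; noncomm_ring
    have n1 := psd_diag_nonneg c1 i
    have n2 := psd_diag_nonneg c2 i
    rw [d1] at n1; rw [d2] at n2
    simp only [Matrix.sub_apply, Matrix.add_apply, Matrix.diagonal_apply_eq] at n1 n2
    rw [abs_le]
    constructor <;> linarith
  -- Combine
  calc (∑ i, ∑ j, (D i j)^2)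
      = ∑ i, (lam i)^2 := step1
    _ ≤ ∑ i, |(star U * C * U) i i| := by
        refine Finset.sum_le_sum fun i _ => ?_
        rw [step3 i, abs_mul]
        have h4 := step4 i
        have h0 : (0:ℝ) ≤ |lam i| := abs_nonneg _
        have hm : |(star U * M * U) i i| = (star U * M * U) i i :=
          abs_of_nonneg (le_trans h0 h4)
        rw [hm]
        calc (lam i)^2 = |lam i| * |lam i| := by rw [← abs_mul, abs_of_nonneg (mul_self_nonneg _), sq]
          _ ≤ |lam i| * (star U * M * U) i i := by
              exact mul_le_mul_of_nonneg_left h4 h0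
    _ ≤ nuclearNorm C := sum_abs_diag_le hCh hUmem
end

section
/- If c, α > 0 are constants such that c · d_G(X,Y)^α ≤ d_D(X,Y) for all X, Y ∈ R^{d×n} with all columns of norm at most 1, where n ≥ 3 and d ≥ 2, then α ≥ 2. In particular, the Procrustes Matching metric and the Hard-Gromov-Wasserstein metric are not bi-Lipschitz equivalent on the unit ball. -/
open Finset

namespace HolderAux

noncomputable def av (n : ℕ) (j : Fin n) : ℝ := (j : ℝ) / ((n : ℝ) - 1)

noncomputable def lam (n : ℕ) (j : Fin n) : ℝ :=
  if (j : ℕ) = 0 then ((n:ℝ)-1)*((n:ℝ)-2)/2 else if (j : ℕ) = 1 then 1 - (n:ℝ)*((n:ℝ)-1)/2 else 1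

noncomputable def Ymat (d n : ℕ) (ε : ℝ) : Matrix (Fin d) (Fin n) ℝ :=
  fun k j => if (k : ℕ) = 0 then av n j
    else if (k : ℕ) = 1 then (if (j : ℕ) = 0 then ε else 0) else 0

lemma gauss (n : ℕ) : ∑ i ∈ Finset.range n, (i:ℝ) = (n:ℝ)*((n:ℝ)-1)/2 := by
  induction n with
  | zero => simp
  | succ m ih => rw [Finset.sum_range_succ, ih]; push_cast; ring

lemma lam_sum {n : ℕ} (hn : 3 ≤ n) : ∑ j, lam n j = 0 := by
  have hn' : (3:ℝ) ≤ (n:ℝ) := by exact_mod_cast hn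
  have h1 : ∑ j, lam n j = ∑ i ∈ range n,
      (1 + (if i = 0 then ((n:ℝ)-1)*((n:ℝ)-2)/2 - 1 else 0)
         + (if i = 1 then (1 - (n:ℝ)*((n:ℝ)-1)/2) - 1 else 0)) := by
    rw [← Fin.sum_univ_eq_sum_range (fun i => (1 + (if i = 0 then ((n:ℝ)-1)*((n:ℝ)-2)/2 - 1 else 0)
         + (if i = 1 then (1 - (n:ℝ)*((n:ℝ)-1)/2) - 1 else 0)))]
    refine Finset.sum_congr rfl fun j _ => ?_
    unfold lam
    split_ifs <;> first | omega | ring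
  rw [h1]
  rw [Finset.sum_add_distrib, Finset.sum_add_distrib, Finset.sum_const,
    Finset.sum_ite_eq' (range n) 0 (fun _ => ((n:ℝ)-1)*((n:ℝ)-2)/2 - 1),
    Finset.sum_ite_eq' (range n) 1 (fun _ => (1 - (n:ℝ)*((n:ℝ)-1)/2) - 1)]
  have h0 : (0:ℕ) ∈ range n := by simp; omega
  have h1' : (1:ℕ) ∈ range n := by simp; omega
  rw [if_pos h0, if_pos h1', card_range]
  ring

lemma lam_av_sum {n : ℕ} (hn : 3 ≤ n) : ∑ j, lam n j * av n j = 0 := by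
  have hn' : (3:ℝ) ≤ (n:ℝ) := by exact_mod_cast hn
  have h1 : ∑ j, lam n j * av n j = ∑ i ∈ range n,
      (((i:ℝ) + (if i = 1 then (1 - (n:ℝ)*((n:ℝ)-1)/2) - 1 else 0)) / ((n:ℝ)-1)) := by
    rw [← Fin.sum_univ_eq_sum_range (fun i =>
      (((i:ℝ) + (if i = 1 then (1 - (n:ℝ)*((n:ℝ)-1)/2) - 1 else 0)) / ((n:ℝ)-1)))]
    refine Finset.sum_congr rfl fun j _ => ?_
    unfold lam av
    split_ifs with hA hB hC
    · omega
    · simp [hA]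
    · rw [show ((j:ℕ):ℝ) = 1 by exact_mod_cast hC]; ring
    · ring
  rw [h1, ← Finset.sum_div, Finset.sum_add_distrib, gauss,
    Finset.sum_ite_eq' (range n) 1 (fun _ => (1 - (n:ℝ)*((n:ℝ)-1)/2) - 1)]
  have h1' : (1:ℕ) ∈ range n := by simp; omega
  rw [if_pos h1']
  have : (n:ℝ) - 1 ≠ 0 := by nlinarith
  field_simp
  ring

lemma one_le_abs_lam {n : ℕ} (hn : 3 ≤ n) (j : Fin n) : 1 ≤ |lam n j| := by
  have hn' : (3:ℝ) ≤ (n:ℝ) := by exact_mod_cast hn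
  unfold lam
  split_ifs
  · rw [abs_of_nonneg (by nlinarith)]; nlinarith
  · rw [abs_of_nonpos (by nlinarith)]; nlinarith
  · simp

lemma sq_sum_col {d : ℕ} (hd : 2 ≤ d) (u v : ℝ) :
    ∑ k : Fin d, (if (k:ℕ) = 0 then u else if (k:ℕ) = 1 then v else 0)^2 = u^2 + v^2 := by
  have h1 : ∑ k : Fin d, (if (k:ℕ) = 0 then u else if (k:ℕ) = 1 then v else 0)^2
      = ∑ i ∈ range d, ((if i = 0 then u^2 else 0) + (if i = 1 then v^2 else 0)) := by
    rw [← Fin.sum_univ_eq_sum_range (fun i => ((if i = 0 then u^2 else 0) + (if i = 1 then v^2 else 0)))]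
    refine Finset.sum_congr rfl fun k _ => ?_
    split_ifs <;> first | omega | ring
  rw [h1, Finset.sum_add_distrib,
    Finset.sum_ite_eq' (range d) 0 (fun _ => u^2),
    Finset.sum_ite_eq' (range d) 1 (fun _ => v^2),
    if_pos (by simp; omega : (0:ℕ) ∈ range d), if_pos (by simp; omega : (1:ℕ) ∈ range d)]

lemma colDist_Y {d n : ℕ} (hd : 2 ≤ d) (ε : ℝ) (i j : Fin n) :
    colDist (Ymat d n ε) i j = Real.sqrt ((av n i - av n j)^2 +
      ((if (i:ℕ) = 0 then ε else 0) - (if (j:ℕ) = 0 then ε else 0))^2) := by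
  unfold colDist
  congr 1
  rw [← sq_sum_col hd (av n i - av n j) ((if (i:ℕ) = 0 then ε else 0) - (if (j:ℕ) = 0 then ε else 0))]
  refine Finset.sum_congr rfl fun k _ => ?_
  unfold Ymat
  split_ifs <;> ring

lemma colnorm_Y {d n : ℕ} (hn : 3 ≤ n) (hd : 2 ≤ d) {ε : ℝ} (hε0 : 0 ≤ ε) (hε1 : ε ≤ 1)
    (j : Fin n) : Real.sqrt (∑ k, (Ymat d n ε k j)^2) ≤ 1 := by
  have hn' : (3:ℝ) ≤ (n:ℝ) := by exact_mod_cast hn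
  have hsum : ∑ k, (Ymat d n ε k j)^2 = (av n j)^2 + (if (j:ℕ) = 0 then ε else 0)^2 := by
    rw [← sq_sum_col hd (av n j) (if (j:ℕ) = 0 then ε else 0)]
    refine Finset.sum_congr rfl fun k _ => ?_
    unfold Ymat
    split_ifs <;> ring
  rw [hsum, Real.sqrt_le_one]
  have hav0 : 0 ≤ av n j := by
    unfold av; apply div_nonneg (by positivity) (by linarith)
  have hav1 : av n j ≤ 1 := by
    unfold av
    rw [div_le_one (by linarith)]
    have : (j:ℕ) ≤ n - 1 := by omega
    have : ((j:ℕ):ℝ) ≤ (n:ℝ) - 1 := by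
      have hj : (j:ℕ) < n := j.2
      have : ((j:ℕ):ℝ) < (n:ℝ) := by exact_mod_cast hj
      have hj1 : (j:ℕ) + 1 ≤ n := hj
      have : ((j:ℕ):ℝ) + 1 ≤ (n:ℝ) := by exact_mod_cast hj1
      linarith
    linarith
  split_ifs with hj0
  · have : av n j = 0 := by unfold av; rw [show ((j:ℕ):ℝ) = 0 by exact_mod_cast hj0]; simp
    rw [this]; nlinarith
  · nlinarith

lemma av_zero {n : ℕ} {j : Fin n} (hj : (j:ℕ) = 0) : av n j = 0 := by
  unfold av; rw [show ((j:ℕ):ℝ) = 0 by exact_mod_cast hj]; simp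

lemma av_lb {n : ℕ} (hn : 3 ≤ n) {j : Fin n} (hj : (j:ℕ) ≠ 0) :
    1/((n:ℝ)-1) ≤ av n j := by
  have hn' : (3:ℝ) ≤ (n:ℝ) := by exact_mod_cast hn
  unfold av
  rw [div_le_div_iff_of_pos_right (by linarith)]
  have : 1 ≤ (j:ℕ) := by omega
  exact_mod_cast this

lemma sqrt_perturb {a e : ℝ} (ha : 0 < a) : Real.sqrt (a^2 + e^2) ≤ a + e^2/(2*a) := by
  have h1 : a^2 + e^2 ≤ (a + e^2/(2*a))^2 := by
    field_simp
    nlinarith [sq_nonneg (e^2)]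
  calc Real.sqrt (a^2+e^2) ≤ Real.sqrt ((a + e^2/(2*a))^2) := Real.sqrt_le_sqrt h1
    _ = a + e^2/(2*a) := Real.sqrt_sq (by positivity)

lemma key2 {n : ℕ} (hn : 3 ≤ n) {D a ε : ℝ} (hε0 : 0 ≤ ε)
    (ha : 1/((n:ℝ)-1) ≤ a) (haD : D^2 = a^2) :
    Real.sqrt (D^2 + ε^2) - Real.sqrt (D^2) ≤ ((n:ℝ)-1) * ε^2 := by
  have hn' : (3:ℝ) ≤ (n:ℝ) := by exact_mod_cast hn
  have ha0 : 0 < a := lt_of_lt_of_le (by have h : (0:ℝ) < (n:ℝ)-1 := by linarith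
                                         positivity) ha
  have h1 : Real.sqrt (D^2) = a := by rw [haD]; exact Real.sqrt_sq ha0.le
  have h2 : Real.sqrt (D^2 + ε^2) ≤ a + ε^2/(2*a) := by
    rw [haD]; exact sqrt_perturb ha0
  have h3 : 1 ≤ a * ((n:ℝ)-1) := by
    rw [div_le_iff₀ (by linarith : (0:ℝ) < (n:ℝ)-1)] at ha
    linarith
  have h4 : ε^2/(2*a) ≤ ((n:ℝ)-1) * ε^2 := by
    rw [div_le_iff₀ (by positivity)]
    nlinarith [sq_nonneg ε]
  linarith

lemma abs_case0 {D x y B : ℝ} (hB : 0 ≤ B) (hxy : x^2 = y^2) :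
    |Real.sqrt (D^2 + x^2) - Real.sqrt (D^2 + y^2)| ≤ B := by
  rw [hxy, sub_self, abs_zero]; exact hB

lemma abs_case {n : ℕ} (hn : 3 ≤ n) {D a ε x y : ℝ} (hε0 : 0 ≤ ε)
    (ha : 1/((n:ℝ)-1) ≤ a) (haD : D^2 = a^2) (hx : x^2 = 0) (hy : y^2 = ε^2) :
    |Real.sqrt (D^2 + x^2) - Real.sqrt (D^2 + y^2)| ≤ ((n:ℝ)-1) * ε^2 := by
  rw [hx, hy, add_zero]
  have h3 : Real.sqrt (D^2) ≤ Real.sqrt (D^2 + ε^2) := by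
    apply Real.sqrt_le_sqrt; nlinarith [sq_nonneg ε]
  rw [abs_sub_comm, abs_of_nonneg (sub_nonneg.2 h3)]
  exact key2 hn hε0 ha haD

lemma term_bound {d n : ℕ} (hn : 3 ≤ n) (hd : 2 ≤ d) {ε : ℝ} (hε0 : 0 ≤ ε) (i j : Fin n) :
    |colDist (Ymat d n 0) i j - colDist (Ymat d n ε) i j| ≤ ((n:ℝ)-1) * ε^2 := by
  have hn' : (3:ℝ) ≤ (n:ℝ) := by exact_mod_cast hn
  have hnn : (0:ℝ) ≤ ((n:ℝ)-1) * ε^2 := mul_nonneg (by linarith) (sq_nonneg _)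
  rw [colDist_Y hd, colDist_Y hd]
  by_cases hi : (i:ℕ) = 0 <;> by_cases hj : (j:ℕ) = 0
  · exact abs_case0 hnn (by simp [hi, hj])
  · exact abs_case hn hε0 (av_lb hn hj) (by rw [av_zero hi]; ring)
      (by simp [hi, hj]) (by simp [hi, hj])
  · exact abs_case hn hε0 (av_lb hn hi) (by rw [av_zero hj]; ring)
      (by simp [hi, hj]) (by simp [hi, hj])
  · exact abs_case0 hnn (by simp [hi, hj])

lemma dD_le {d n : ℕ} (hn : 3 ≤ n) (hd : 2 ≤ d) {ε : ℝ} (hε0 : 0 ≤ ε) :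
    dD (Ymat d n 0) (Ymat d n ε) ≤ (n:ℝ)^2 * (((n:ℝ)-1) * ε^2) := by
  have hb : BddBelow (Set.range fun π : Equiv.Perm (Fin n) =>
      ∑ i, ∑ j, |colDist (Ymat d n 0) i j - colDist (Ymat d n ε) (π i) (π j)|) := by
    refine ⟨0, ?_⟩
    rintro x ⟨π, rfl⟩
    positivity
  refine le_trans (ciInf_le hb (Equiv.refl _)) ?_
  simp only [Equiv.refl_apply]
  calc ∑ i, ∑ j, |colDist (Ymat d n 0) i j - colDist (Ymat d n ε) i j|
      ≤ ∑ _i : Fin n, ∑ _j : Fin n, ((n:ℝ)-1) * ε^2 :=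
        Finset.sum_le_sum fun i _ => Finset.sum_le_sum fun j _ => term_bound hn hd hε0 i j
    _ = (n:ℝ)^2 * (((n:ℝ)-1) * ε^2) := by
        simp [Finset.sum_const, Finset.card_univ]; ring

lemma lam_dot_X {d n : ℕ} (hn : 3 ≤ n) (k : Fin d) :
    ∑ j, lam n j * Ymat d n 0 k j = 0 := by
  unfold Ymat
  by_cases hk0 : (k:ℕ) = 0
  · simp only [if_pos hk0]
    exact lam_av_sum hn
  · by_cases hk1 : (k:ℕ) = 1
    · simp [hk0, hk1]
    · simp [hk0, hk1]

lemma dG_ge {d n : ℕ} (hn : 3 ≤ n) (hd : 2 ≤ d) {ε : ℝ} (hε : 0 < ε) :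
    ε / (∑ j, |lam n j|) ≤ dG (Ymat d n 0) (Ymat d n ε) := by
  have hn' : (3:ℝ) ≤ (n:ℝ) := by exact_mod_cast hn
  set Λ := ∑ j : Fin n, |lam n j| with hΛdef
  have hΛn : (n:ℝ) ≤ Λ := by
    have := Finset.sum_le_sum (fun j (_ : j ∈ (univ : Finset (Fin n))) => one_le_abs_lam hn j)
    simpa [Finset.card_univ] using this
  have hΛ : 0 < Λ := by linarith
  haveI : Nonempty {R : Matrix (Fin d) (Fin d) ℝ // R ∈ Matrix.orthogonalGroup (Fin d) ℝ} :=
    ⟨⟨1, one_mem _⟩⟩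
  refine le_ciInf fun π => le_ciInf fun R => le_ciInf fun t => ?_
  set X := Ymat d n 0 with hX
  set Y := Ymat d n ε with hY
  set Rm := (R : Matrix (Fin d) (Fin d) ℝ) with hRm
  set w : Fin n → Fin d → ℝ := fun j k => X k j - (∑ l, Rm k l * Y l (π j)) - t k with hw
  set S := ∑ j, ∑ k, (w j k)^2 with hS
  show ε / Λ ≤ Real.sqrt S
  have hS0 : 0 ≤ S := by positivity
  -- the vector v
  set v : Fin d → ℝ := fun l => ∑ i, lam n (π.symm i) * Y l i with hv
  -- coordinates of the lambda-weighted sum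
  have hg : ∀ k, ∑ j, lam n j * w j k = -(Rm.mulVec v k) := by
    intro k
    have e1 : ∑ j, lam n j * w j k
        = (∑ j, lam n j * X k j) - (∑ j, lam n j * ∑ l, Rm k l * Y l (π j))
          - (∑ j, lam n j) * t k := by
      simp only [hw, mul_sub, Finset.sum_sub_distrib, Finset.sum_mul]
    have e2 : ∑ j, lam n j * ∑ l, Rm k l * Y l (π j) = Rm.mulVec v k := by
      calc ∑ j, lam n j * ∑ l, Rm k l * Y l (π j)
          = ∑ j, ∑ l, lam n j * (Rm k l * Y l (π j)) := by
            refine Finset.sum_congr rfl fun j _ => ?_; rw [Finset.mul_sum]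
        _ = ∑ l, ∑ j, lam n j * (Rm k l * Y l (π j)) := Finset.sum_comm
        _ = ∑ l, Rm k l * ∑ j, lam n j * Y l (π j) := by
            refine Finset.sum_congr rfl fun l _ => ?_
            rw [Finset.mul_sum]
            refine Finset.sum_congr rfl fun j _ => ?_; ring
        _ = ∑ l, Rm k l * v l := by
            refine Finset.sum_congr rfl fun l _ => ?_
            congr 1
            have h := Equiv.sum_comp π (fun i => lam n (π.symm i) * Y l i)
            simp only [Equiv.symm_apply_apply] at h
            simp only [hv]
            exact h
        _ = Rm.mulVec v k := rfl
    rw [e1, lam_dot_X hn k, lam_sum hn, e2]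
    ring
  -- orthogonality
  have horth : ∑ k, (Rm.mulVec v k)^2 = ∑ l, (v l)^2 := by
    have h1 : dotProduct (Rm.mulVec v) (Rm.mulVec v) = dotProduct v v := by
      rw [Matrix.dotProduct_mulVec, ← Matrix.mulVec_transpose, Matrix.mulVec_mulVec]
      have horth' : Rm.transpose * Rm = 1 := by
        have hmem := R.2
        rw [Matrix.mem_orthogonalGroup_iff'] at hmem
        simpa [Matrix.star_eq_conjTranspose, Matrix.conjTranspose] using hmem
      rw [horth', Matrix.one_mulVec]
    simpa [dotProduct, sq] using h1
  -- lower bound on v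
  have hd1 : 1 < d := by omega
  have hn0 : 0 < n := by omega
  have hvk1 : v ⟨1, hd1⟩ = lam n (π.symm ⟨0, hn0⟩) * ε := by
    have hstep : ∀ i : Fin n, lam n (π.symm i) * Y (⟨1, hd1⟩ : Fin d) i
        = if i = (⟨0, hn0⟩ : Fin n) then lam n (π.symm i) * ε else 0 := by
      intro i
      have hk : Y (⟨1, hd1⟩ : Fin d) i = if (i:ℕ) = 0 then ε else 0 := by
        simp [hY, Ymat]
      rw [hk]
      by_cases hi : (i:ℕ) = 0
      · rw [if_pos hi, if_pos (Fin.ext hi)]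
      · rw [if_neg hi, if_neg (fun hh => hi (by simp [hh])), mul_zero]
    simp only [hv]
    rw [Finset.sum_congr rfl fun i _ => hstep i,
      Finset.sum_ite_eq' univ (⟨0, hn0⟩ : Fin n) (fun i => lam n (π.symm i) * ε)]
    simp
  have hvlow : ε^2 ≤ ∑ l, (v l)^2 := by
    have h2 : ε^2 ≤ (v ⟨1, hd1⟩)^2 := by
      rw [hvk1]
      have h3 := one_le_abs_lam hn (π.symm ⟨0, hn0⟩)
      have h4 : 1 ≤ (lam n (π.symm ⟨0, hn0⟩))^2 := by nlinarith [sq_abs (lam n (π.symm ⟨0, hn0⟩))]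
      calc ε^2 = 1 * ε^2 := (one_mul _).symm
        _ ≤ (lam n (π.symm ⟨0, hn0⟩))^2 * ε^2 := mul_le_mul_of_nonneg_right h4 (sq_nonneg ε)
        _ = (lam n (π.symm ⟨0, hn0⟩) * ε)^2 := (mul_pow _ _ _).symm
    exact h2.trans (Finset.single_le_sum (f := fun l : Fin d => (v l)^2)
      (fun l _ => sq_nonneg _) (mem_univ (⟨1, hd1⟩ : Fin d)))
  -- Euclidean space estimates
  set W : Fin n → EuclideanSpace ℝ (Fin d) := fun j => (WithLp.equiv 2 (Fin d → ℝ)).symm (w j) with hW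
  have hWnorm : ∀ j, ‖W j‖ = Real.sqrt (∑ k, (w j k)^2) := by
    intro j
    rw [EuclideanSpace.norm_eq]
    congr 1
    refine Finset.sum_congr rfl fun k _ => ?_
    simp [hW, Real.norm_eq_abs, sq_abs]
  have hWle : ∀ j, ‖W j‖ ≤ Real.sqrt S := by
    intro j
    rw [hWnorm j]
    apply Real.sqrt_le_sqrt
    exact Finset.single_le_sum (f := fun j' : Fin n => ∑ k, (w j' k)^2)
      (fun j' _ => by positivity) (mem_univ j)
  have hcoord : ∀ k, (∑ j, lam n j • W j) k = ∑ j, lam n j * w j k := by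
    intro k
    rw [WithLp.ofLp_sum, Finset.sum_apply]
    refine Finset.sum_congr rfl fun j _ => ?_
    simp [hW]
  have hnormsum : ‖∑ j, lam n j • W j‖ = Real.sqrt (∑ k, (∑ j, lam n j * w j k)^2) := by
    rw [EuclideanSpace.norm_eq]
    congr 1
    refine Finset.sum_congr rfl fun k _ => ?_
    rw [show ‖(∑ j, lam n j • W j) k‖ = |(∑ j, lam n j • W j) k| from rfl, sq_abs, hcoord k]
  have hlow : ε ≤ ‖∑ j, lam n j • W j‖ := by
    rw [hnormsum]
    have heq : ∑ k, (∑ j, lam n j * w j k)^2 = ∑ l, (v l)^2 := by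
      rw [Finset.sum_congr rfl fun k (_ : k ∈ univ) => by rw [hg k]]
      simp only [neg_sq]
      exact horth
    calc ε = Real.sqrt (ε^2) := (Real.sqrt_sq hε.le).symm
      _ ≤ _ := by rw [heq]; exact Real.sqrt_le_sqrt hvlow
  have hup : ‖∑ j, lam n j • W j‖ ≤ Λ * Real.sqrt S := by
    calc ‖∑ j, lam n j • W j‖ ≤ ∑ j, ‖lam n j • W j‖ := norm_sum_le _ _
      _ = ∑ j, |lam n j| * ‖W j‖ := by
          refine Finset.sum_congr rfl fun j _ => ?_
          rw [norm_smul, Real.norm_eq_abs]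
      _ ≤ ∑ j, |lam n j| * Real.sqrt S :=
          Finset.sum_le_sum fun j _ => mul_le_mul_of_nonneg_left (hWle j) (abs_nonneg _)
      _ = Λ * Real.sqrt S := by rw [← Finset.sum_mul]
  rw [div_le_iff₀ hΛ]
  calc ε ≤ ‖∑ j, lam n j • W j‖ := hlow
    _ ≤ Λ * Real.sqrt S := hup
    _ = Real.sqrt S * Λ := mul_comm _ _

end HolderAux

theorem holder_exponent_ge_two {d n : ℕ} (hn : 3 ≤ n) (hd : 2 ≤ d)
    (c α : ℝ) (hc : 0 < c) (hα : 0 < α)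
    (h : ∀ X Y : Matrix (Fin d) (Fin n) ℝ,
      (∀ j, Real.sqrt (∑ k, (X k j)^2) ≤ 1) →
      (∀ j, Real.sqrt (∑ k, (Y k j)^2) ≤ 1) →
      c * dG X Y ^ α ≤ dD X Y) :
    2 ≤ α := by
  by_contra hlt
  push_neg at hlt
  have hn' : (3:ℝ) ≤ (n:ℝ) := by exact_mod_cast hn
  set Λ := ∑ j : Fin n, |HolderAux.lam n j| with hΛdef
  have hΛn : (n:ℝ) ≤ Λ := by
    have := Finset.sum_le_sum
      (fun j (_ : j ∈ (univ : Finset (Fin n))) => HolderAux.one_le_abs_lam hn j)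
    simpa [Finset.card_univ] using this
  have hΛ : 0 < Λ := by linarith
  set C := (n:ℝ)^2 * ((n:ℝ)-1) with hC
  have hCpos : 0 < C := by nlinarith
  have key : ∀ ε : ℝ, 0 < ε → ε ≤ 1 → c * (ε/Λ)^α ≤ C * ε^2 := by
    intro ε hε hε1
    have h1 := h (HolderAux.Ymat d n 0) (HolderAux.Ymat d n ε)
      (HolderAux.colnorm_Y hn hd le_rfl zero_le_one)
      (HolderAux.colnorm_Y hn hd hε.le hε1)
    have h2 := HolderAux.dG_ge hn hd hε
    have h3 := HolderAux.dD_le hn hd hε.le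
    have h4 : (ε/Λ)^α ≤ dG (HolderAux.Ymat d n 0) (HolderAux.Ymat d n ε) ^ α :=
      Real.rpow_le_rpow (by positivity) h2 hα.le
    calc c * (ε/Λ)^α ≤ c * dG (HolderAux.Ymat d n 0) (HolderAux.Ymat d n ε) ^ α :=
          mul_le_mul_of_nonneg_left h4 hc.le
      _ ≤ dD (HolderAux.Ymat d n 0) (HolderAux.Ymat d n ε) := h1
      _ ≤ (n:ℝ)^2 * (((n:ℝ)-1) * ε^2) := h3
      _ = C * ε^2 := by rw [hC]; ring
  have hΛα : 0 < Λ^α := Real.rpow_pos_of_pos hΛ α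
  set b := c / (C * Λ^α) with hb
  have hbpos : 0 < b := div_pos hc (mul_pos hCpos hΛα)
  set δ := b^((2-α)⁻¹) with hδ
  have h2α : 0 < 2 - α := by linarith
  have hδpos : 0 < δ := Real.rpow_pos_of_pos hbpos _
  set ε := min 1 (δ/2) with hεdef
  have hεpos : 0 < ε := lt_min one_pos (by positivity)
  have hε1 : ε ≤ 1 := min_le_left _ _
  have hkey := key ε hεpos hε1
  have hεΛ : (ε/Λ)^α = ε^α / Λ^α := Real.div_rpow hεpos.le hΛ.le α
  have hsplit : ε^(2:ℝ) = ε^α * ε^(2-α) := by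
    rw [← Real.rpow_add hεpos]; ring_nf
  have hε2 : ε^(2:ℝ) = ε^2 := by
    rw [show (2:ℝ) = ((2:ℕ):ℝ) by norm_num, Real.rpow_natCast]
  have hεα : 0 < ε^α := Real.rpow_pos_of_pos hεpos α
  have h5 : c ≤ C * Λ^α * ε^(2-α) := by
    rw [hεΛ, ← hε2, hsplit] at hkey
    have hpos : (0:ℝ) < Λ^α / ε^α := by positivity
    have hmul := mul_le_mul_of_nonneg_right hkey hpos.le
    calc c = c * (ε^α/Λ^α) * (Λ^α/ε^α) := by field_simp
      _ ≤ C * (ε^α * ε^(2-α)) * (Λ^α/ε^α) := hmul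
      _ = C * Λ^α * ε^(2-α) := by field_simp
  have h6 : b ≤ ε^(2-α) := by
    rw [hb, div_le_iff₀ (mul_pos hCpos hΛα)]
    calc c ≤ C * Λ^α * ε^(2-α) := h5
      _ = ε^(2-α) * (C * Λ^α) := by ring
  have h7 : ε^(2-α) ≤ (δ/2)^(2-α) :=
    Real.rpow_le_rpow hεpos.le (min_le_right _ _) h2α.le
  have h8 : (δ/2)^(2-α) = b / 2^(2-α) := by
    rw [Real.div_rpow hδpos.le (by norm_num : (0:ℝ) ≤ 2), hδ,
      ← Real.rpow_mul hbpos.le, inv_mul_cancel₀ (ne_of_gt h2α), Real.rpow_one]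
  have h9 : b / 2^(2-α) < b := by
    have h10 : 1 < (2:ℝ)^(2-α) :=
      (Real.one_lt_rpow_iff (by norm_num)).2 (Or.inl ⟨one_lt_two, h2α⟩)
    exact div_lt_self hbpos h10
  rw [h8] at h7
  linarith
end

section
/- Fix n ≥ 3, d ≥ 2. Let a_1 = 0 ∈ R^{d-1} and a_2,...,a_n ∈ R^{d-1} be distinct points with Σ a_j = 0. For ε ≥ 0, define X^ε ∈ R^{d×n} with columns (a_1, ε), (a_2, -ε), (a_3, 0), ..., (a_n, 0) (last coordinate appended). Then for all sufficiently small ε > 0, the Procrustes Matching distance satisfies d_G(X^0, X^ε) ≥ ε. -/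
/-- The perturbed point set: columns are (a_j, ε_j) with ε_0 = ε, ε_1 = -ε and 0 otherwise. -/
noncomputable def Xpert {m n : ℕ} (a : Fin n → Fin m → ℝ) (ε : ℝ) :
    Matrix (Fin (m+1)) (Fin n) ℝ :=
  fun k j => if h : (k : ℕ) < m then a j ⟨k, h⟩
    else if (j : ℕ) = 0 then ε else if (j : ℕ) = 1 then -ε else 0


lemma ortho_cols {d : ℕ} {R : Matrix (Fin d) (Fin d) ℝ}
    (hR : R ∈ Matrix.orthogonalGroup (Fin d) ℝ) (l l' : Fin d) :
    ∑ k, R k l * R k l' = if l = l' then 1 else 0 := by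
  have h : star R * R = 1 := (Matrix.mem_orthogonalGroup_iff' _ _).mp hR
  have h2 := congrFun (congrFun h l) l'
  simpa [Matrix.mul_apply, Matrix.one_apply, Matrix.star_apply] using h2

lemma ortho_norm {d : ℕ} {R : Matrix (Fin d) (Fin d) ℝ}
    (hR : R ∈ Matrix.orthogonalGroup (Fin d) ℝ) (x : Fin d → ℝ) :
    ∑ k, (∑ l, R k l * x l)^2 = ∑ l, (x l)^2 := by
  have h1 : ∀ k, (∑ l, R k l * x l)^2 = ∑ l, ∑ l', (R k l * x l) * (R k l' * x l') := by
    intro k; rw [sq, Finset.sum_mul_sum]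
  calc ∑ k, (∑ l, R k l * x l)^2
      = ∑ k, ∑ l, ∑ l', (R k l * x l) * (R k l' * x l') :=
        Finset.sum_congr rfl fun k _ => h1 k
    _ = ∑ l, ∑ l', (x l * x l') * ∑ k, R k l * R k l' := by
        rw [Finset.sum_comm]
        refine Finset.sum_congr rfl fun l _ => ?_
        rw [Finset.sum_comm]
        refine Finset.sum_congr rfl fun l' _ => ?_
        rw [Finset.mul_sum]
        exact Finset.sum_congr rfl fun k _ => by ring
    _ = ∑ l, (x l)^2 := by
        refine Finset.sum_congr rfl fun l _ => ?_
        simp only [ortho_cols hR, mul_ite, mul_one, mul_zero]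
        rw [Finset.sum_ite_eq Finset.univ l (fun l' => x l * x l')]
        simp [sq]


private lemma quadA {ε C D : ℝ} (hC2 : C^2 ≤ 2*D) (hD6 : 6*ε^2 ≤ D) :
    ε^2 ≤ D - 2*ε*C + 2*ε^2 := by nlinarith [sq_nonneg (C - 4*ε)]

private lemma quadB {ε C D : ℝ} (hC2 : C^2 ≤ D) :
    ε^2 ≤ D - 2*ε*C + 2*ε^2 := by nlinarith [sq_nonneg (C - ε)]

set_option maxHeartbeats 1000000 in
lemma key_bound {m n : ℕ} (hm : 1 ≤ m) (hn : 3 ≤ n)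
    (a : Fin n → Fin m → ℝ)
    (ha0 : ∀ i, a ⟨0, Nat.lt_of_lt_of_le (by norm_num) hn⟩ i = 0)
    (hsum : ∀ i, ∑ j, a j i = 0)
    (ε : ℝ) (hε : 0 < ε)
    (hμ : ∀ k : Fin n, k ≠ ⟨0, Nat.lt_of_lt_of_le (by norm_num) hn⟩ → 24 * ε^2 ≤ ∑ i, (a k i)^2)
    (π : Equiv.Perm (Fin n)) (R : Matrix (Fin (m+1)) (Fin (m+1)) ℝ)
    (hR : R ∈ Matrix.orthogonalGroup (Fin (m+1)) ℝ) (t : Fin (m+1) → ℝ) :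
    ε^2 ≤ ∑ j, ∑ k, (Xpert a 0 k j - (∑ l, R k l * Xpert a ε l (π j)) - t k)^2 := by
  have hn0 : (0:ℝ) < (n:ℝ) := by positivity
  have hn1 : (1:ℝ) ≤ (n:ℝ) := by exact_mod_cast by omega
  set i0 : Fin n := ⟨0, by omega⟩ with hi0
  set i1 : Fin n := ⟨1, by omega⟩ with hi1
  have hii : i0 ≠ i1 := by simp [hi0, hi1, Fin.ext_iff]
  set X : Matrix (Fin (m+1)) (Fin n) ℝ := Xpert a 0 with hXdef
  have hXval : ∀ (k : Fin (m+1)) (j : Fin n),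
      X k j = if h : (k:ℕ) < m then a j ⟨k, h⟩ else 0 := by
    intro k j; simp only [hXdef, Xpert]; split_ifs <;> norm_num
  have hXlast : ∀ j, X (Fin.last m) j = 0 := by
    intro j; rw [hXval]; simp
  have hXcol0 : ∀ k, X k i0 = 0 := by
    intro k; rw [hXval]; split_ifs with h
    · exact ha0 _
    · rfl
  have hXsum : ∀ k, ∑ j, X k j = 0 := by
    intro k
    rcases lt_or_ge (k:ℕ) m with h | h
    · calc ∑ j, X k j = ∑ j, a j ⟨k, h⟩ :=
            Finset.sum_congr rfl fun j _ => by rw [hXval, dif_pos h]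
        _ = 0 := hsum _
    · calc ∑ j, X k j = ∑ j, (0:ℝ) :=
            Finset.sum_congr rfl fun j _ => by rw [hXval, dif_neg (by omega)]
        _ = 0 := by simp
  set r : Fin (m+1) → ℝ := fun k => R k (Fin.last m) with hrdef
  set g : Fin n → ℝ := fun j => (if π j = i0 then (1:ℝ) else 0) - (if π j = i1 then 1 else 0) with hgdef
  set W : Matrix (Fin (m+1)) (Fin n) ℝ := fun k j => ∑ l, R k l * X l (π j) with hWdef
  set M : Matrix (Fin (m+1)) (Fin n) ℝ := fun k j => X k j - W k j - t k with hMdef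
  set u : Fin n → ℝ := fun j => ∑ k, r k * X k j with hudef
  set s : ℝ := ∑ k, r k * t k with hsdef
  set D : ℝ := ∑ j, ∑ k, (M k j)^2 with hDdef
  set C : ℝ := u (π.symm i0) - u (π.symm i1) with hCdef
  -- pointwise identity
  have hpert : ∀ (l : Fin (m+1)) (j : Fin n),
      Xpert a ε l (π j) = X l (π j) + ε * (if l = Fin.last m then g j else 0) := by
    intro l j
    rcases lt_or_ge (l:ℕ) m with h | h
    · have hne : l ≠ Fin.last m := by
        intro e; rw [e, Fin.val_last] at h; omega
      rw [if_neg hne, hXval, dif_pos h]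
      simp only [Xpert, dif_pos h]; ring
    · have he : l = Fin.last m := by
        apply Fin.ext; rw [Fin.val_last]; have := l.isLt; omega
      subst he
      rw [if_pos rfl, hXlast]
      have hnotlt : ¬ ((Fin.last m : ℕ) < m) := by simp
      simp only [Xpert]
      rw [dif_neg hnotlt]
      simp only [hgdef]
      by_cases h0 : (π j : ℕ) = 0
      · rw [if_pos h0, if_pos (Fin.ext h0 : π j = i0),
          if_neg (fun e => by
            have := congrArg Fin.val e
            simp only [hi1] at this
            omega : ¬ π j = i1)]
        ring
      · by_cases h1v : (π j : ℕ) = 1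
        · rw [if_neg h0, if_pos h1v, if_pos (Fin.ext h1v : π j = i1),
            if_neg (fun e => h0 (congrArg Fin.val e) : ¬ π j = i0)]
          ring
        · rw [if_neg h0, if_neg h1v,
            if_neg (fun e => h0 (congrArg Fin.val e) : ¬ π j = i0),
            if_neg (fun e => h1v (congrArg Fin.val e) : ¬ π j = i1)]
          ring
  have hpoint : ∀ (k : Fin (m+1)) (j : Fin n),
      X k j - (∑ l, R k l * Xpert a ε l (π j)) - t k = M k j - ε * (r k * g j) := by
    intro k j
    have h1 : ∑ l, R k l * Xpert a ε l (π j)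
        = W k j + ε * (r k * g j) := by
      calc ∑ l, R k l * Xpert a ε l (π j)
          = ∑ l, (R k l * X l (π j) + (if l = Fin.last m then R k l * (ε * g j) else 0)) := by
            refine Finset.sum_congr rfl fun l _ => ?_
            rw [hpert l j]
            split_ifs <;> ring
        _ = W k j + ε * (r k * g j) := by
            rw [Finset.sum_add_distrib, Finset.sum_ite_eq' Finset.univ (Fin.last m)
              (fun l => R k l * (ε * g j))]
            simp only [Finset.mem_univ, if_true, hWdef, hrdef]
            ring
    rw [h1]; simp only [hMdef]; ring
  -- orthogonality facts
  have hrr : ∑ k, (r k)^2 = 1 := by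
    have h := ortho_cols hR (Fin.last m) (Fin.last m)
    rw [if_pos rfl] at h
    rw [← h]
    exact Finset.sum_congr rfl fun k _ => pow_two (r k)
  have hrW : ∀ j, ∑ k, r k * W k j = 0 := by
    intro j
    calc ∑ k, r k * W k j
        = ∑ l, (∑ k, R k (Fin.last m) * R k l) * X l (π j) := by
          simp only [hWdef, Finset.mul_sum]
          rw [Finset.sum_comm]
          refine Finset.sum_congr rfl fun l _ => ?_
          rw [Finset.sum_mul]
          exact Finset.sum_congr rfl fun k _ => by simp only [hrdef]; ring
      _ = ∑ l, (if (Fin.last m) = l then (1:ℝ) else 0) * X l (π j) := by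
          refine Finset.sum_congr rfl fun l _ => ?_
          rw [ortho_cols hR]
      _ = X (Fin.last m) (π j) := by
          simp only [ite_mul, one_mul, zero_mul]
          rw [Finset.sum_ite_eq Finset.univ (Fin.last m) (fun l => X l (π j))]
          simp
      _ = 0 := hXlast _
  have hrM : ∀ j, ∑ k, r k * M k j = u j - s := by
    intro j
    calc ∑ k, r k * M k j
        = ∑ k, (r k * X k j - r k * W k j - r k * t k) := by
          refine Finset.sum_congr rfl fun k _ => ?_
          simp only [hMdef]; ring
      _ = (∑ k, r k * X k j) - (∑ k, r k * W k j) - (∑ k, r k * t k) := by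
          rw [Finset.sum_sub_distrib, Finset.sum_sub_distrib]
      _ = u j - s := by rw [hrW j, hudef, hsdef]; ring
  -- g facts
  have hg_ite1 : ∑ j, (if π j = i0 then (1:ℝ) else 0) = 1 := by
    rw [Equiv.sum_comp π (fun i => if i = i0 then (1:ℝ) else 0)]
    rw [Finset.sum_ite_eq' Finset.univ i0 (fun _ => (1:ℝ))]
    simp
  have hg_ite2 : ∑ j, (if π j = i1 then (1:ℝ) else 0) = 1 := by
    rw [Equiv.sum_comp π (fun i => if i = i1 then (1:ℝ) else 0)]
    rw [Finset.sum_ite_eq' Finset.univ i1 (fun _ => (1:ℝ))]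
    simp
  have hg_sum : ∑ j, g j = 0 := by
    simp only [hgdef]
    rw [Finset.sum_sub_distrib, hg_ite1, hg_ite2]; ring
  have hgsq : ∑ j, (g j)^2 = 2 := by
    have h1 : ∀ j, (g j)^2
        = (if π j = i0 then (1:ℝ) else 0) + (if π j = i1 then 1 else 0) := by
      intro j; simp only [hgdef]
      split_ifs with h1 h2
      · exact absurd (h1.symm.trans h2) hii
      · ring
      · ring
      · ring
    rw [Finset.sum_congr rfl fun j _ => h1 j, Finset.sum_add_distrib, hg_ite1, hg_ite2]
    norm_num
  have hgv : ∀ v : Fin n → ℝ, ∑ j, g j * v j = v (π.symm i0) - v (π.symm i1) := by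
    intro v
    have h1 : ∀ j, g j * v j
        = (if π j = i0 then v (π.symm i0) else 0) - (if π j = i1 then v (π.symm i1) else 0) := by
      intro j; simp only [hgdef]
      by_cases ha : π j = i0
      · have hb : ¬ π j = i1 := fun e => hii (ha.symm.trans e)
        have hj : π.symm i0 = j := by rw [Equiv.symm_apply_eq]; exact ha.symm
        rw [if_pos ha, if_pos ha, if_neg hb, if_neg hb, hj]; ring
      · by_cases hb : π j = i1
        · have hj : π.symm i1 = j := by rw [Equiv.symm_apply_eq]; exact hb.symm
          rw [if_pos hb, if_pos hb, if_neg ha, if_neg ha, hj]; ring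
        · rw [if_neg ha, if_neg ha, if_neg hb, if_neg hb]; ring
    rw [Finset.sum_congr rfl fun j _ => h1 j, Finset.sum_sub_distrib]
    rw [Equiv.sum_comp π (fun i => if i = i0 then v (π.symm i0) else 0)]
    rw [Equiv.sum_comp π (fun i => if i = i1 then v (π.symm i1) else 0)]
    rw [Finset.sum_ite_eq' Finset.univ i0 (fun _ => v (π.symm i0))]
    rw [Finset.sum_ite_eq' Finset.univ i1 (fun _ => v (π.symm i1))]
    simp
  -- main expansion
  have hexp : ∑ j, ∑ k, (M k j - ε * (r k * g j))^2 = D - 2*ε*C + 2*ε^2 := by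
    have h1 : ∀ j, ∑ k, (M k j - ε*(r k * g j))^2
        = ∑ k, (M k j)^2 - 2*ε*g j*(∑ k, r k * M k j) + ε^2*(g j)^2*(∑ k, (r k)^2) := by
      intro j
      rw [Finset.mul_sum, Finset.mul_sum, ← Finset.sum_sub_distrib, ← Finset.sum_add_distrib]
      exact Finset.sum_congr rfl fun k _ => by ring
    calc ∑ j, ∑ k, (M k j - ε * (r k * g j))^2
        = ∑ j, (∑ k, (M k j)^2 - 2*ε*g j*(u j - s) + ε^2*(g j)^2) := by
          refine Finset.sum_congr rfl fun j _ => ?_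
          rw [h1 j, hrM j, hrr]; ring
      _ = D - 2*ε*C + 2*ε^2 := by
          rw [Finset.sum_add_distrib, Finset.sum_sub_distrib]
          have h2 : ∑ j, g j * (u j - s) = C := by
            calc ∑ j, g j * (u j - s) = ∑ j, (g j * u j - g j * s) :=
                  Finset.sum_congr rfl fun j _ => by ring
              _ = (∑ j, g j * u j) - (∑ j, g j) * s := by
                  rw [Finset.sum_sub_distrib, Finset.sum_mul]
              _ = C := by rw [hgv u, hg_sum, hCdef]; ring
          have e1 : ∑ j, 2*ε*g j*(u j - s) = 2*ε*C := by
            calc ∑ j, 2*ε*g j*(u j - s) = 2*ε*∑ j, g j*(u j - s) := by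
                  rw [Finset.mul_sum]
                  exact Finset.sum_congr rfl fun j _ => by ring
              _ = 2*ε*C := by rw [h2]
          have e2 : ∑ j, ε^2*(g j)^2 = 2*ε^2 := by
            rw [← Finset.mul_sum, hgsq]; ring
          rw [e1, e2, ← hDdef]
  have hrw : ∑ j, ∑ k, (X k j - (∑ l, R k l * Xpert a ε l (π j)) - t k)^2
      = D - 2*ε*C + 2*ε^2 := by
    rw [← hexp]
    exact Finset.sum_congr rfl fun j _ => Finset.sum_congr rfl fun k _ => by rw [hpoint k j]
  rw [hrw]
  -- row bounds
  have husum : ∑ j, u j = 0 := by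
    simp only [hudef]
    rw [Finset.sum_comm]
    calc ∑ k, ∑ j, r k * X k j = ∑ k, r k * ∑ j, X k j :=
          Finset.sum_congr rfl fun k _ => by rw [Finset.mul_sum]
      _ = 0 := by simp [hXsum]
  have hrowCS : ∀ j, (u j - s)^2 ≤ ∑ k, (M k j)^2 := by
    intro j
    have hcs := Finset.sum_mul_sq_le_sq_mul_sq Finset.univ r (fun k => M k j)
    calc (u j - s)^2 = (∑ k, r k * M k j)^2 := by rw [hrM j]
      _ ≤ (∑ k, (r k)^2) * (∑ k, (M k j)^2) := hcs
      _ = ∑ k, (M k j)^2 := by rw [hrr, one_mul]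
  have hT : ∑ j, (u j - s)^2 ≤ D := Finset.sum_le_sum fun j _ => hrowCS j
  have hTu : ∑ j, (u j)^2 ≤ ∑ j, (u j - s)^2 := by
    have hex : ∑ j, (u j - s)^2 = ∑ j, (u j)^2 - 2*s*(∑ j, u j) + (n:ℝ)*s^2 := by
      calc ∑ j, (u j - s)^2 = ∑ j, ((u j)^2 - 2*s*u j + s^2) :=
            Finset.sum_congr rfl fun j _ => by ring
        _ = ∑ j, (u j)^2 - 2*s*(∑ j, u j) + (n:ℝ)*s^2 := by
            rw [Finset.sum_add_distrib, Finset.sum_sub_distrib, ← Finset.mul_sum,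
              Finset.sum_const, Finset.card_univ, Fintype.card_fin, nsmul_eq_mul]
    rw [hex, husum]
    nlinarith [sq_nonneg s]
  have hu2D : ∑ j, (u j)^2 ≤ D := le_trans hTu hT
  -- case split
  by_cases hfix : π.symm i0 = i0
  · -- Case B : π fixes 0
    have hu0 : u i0 = 0 := by
      simp only [hudef]
      calc ∑ k, r k * X k i0 = ∑ k, (0:ℝ) :=
            Finset.sum_congr rfl fun k _ => by rw [hXcol0 k, mul_zero]
        _ = 0 := by simp
    have hC2 : C^2 ≤ D := by
      have h1 : (u (π.symm i1))^2 ≤ ∑ j, (u j)^2 :=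
        Finset.single_le_sum (f := fun j => (u j)^2) (fun j _ => sq_nonneg _) (Finset.mem_univ _)
      have h2 : C = - u (π.symm i1) := by rw [hCdef, hfix, hu0]; ring
      calc C^2 = (u (π.symm i1))^2 := by rw [h2]; ring
        _ ≤ D := le_trans h1 hu2D
    exact quadB hC2
  · -- Case A : π moves 0
    have hmv : π i0 ≠ i0 := by
      intro h; exact hfix ((Equiv.symm_apply_eq π).mpr h.symm)
    set k0 : Fin n := π i0 with hk0def
    have hσ : π.symm i0 ≠ π.symm i1 := fun h => hii (π.symm.injective h)
    have hpair : (u (π.symm i0))^2 + (u (π.symm i1))^2 ≤ ∑ j, (u j)^2 := by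
      have h := Finset.sum_le_sum_of_subset_of_nonneg
        (Finset.subset_univ {π.symm i0, π.symm i1})
        (fun j _ _ => sq_nonneg (u j))
      rwa [Finset.sum_pair hσ] at h
    have hC2 : C^2 ≤ 2*D := by
      have h2 : (u (π.symm i0))^2 + (u (π.symm i1))^2 ≤ D := le_trans hpair hu2D
      rw [hCdef]
      nlinarith [sq_nonneg (u (π.symm i0) + u (π.symm i1)), h2]
    have hcolD : ∑ k, (M k i0)^2 ≤ D := by
      rw [hDdef]
      exact Finset.single_le_sum (f := fun j => ∑ k, (M k j)^2)
        (fun j _ => Finset.sum_nonneg fun k _ => sq_nonneg _) (Finset.mem_univ i0)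
    have hMsum : ∀ k, ∑ j, M k j = -((n:ℝ) * t k) := by
      intro k
      have hWs : ∑ j, W k j = 0 := by
        calc ∑ j, W k j = ∑ l, R k l * ∑ j, X l (π j) := by
              simp only [hWdef]
              rw [Finset.sum_comm]
              exact Finset.sum_congr rfl fun l _ => by rw [Finset.mul_sum]
          _ = ∑ l, R k l * (0:ℝ) := by
              refine Finset.sum_congr rfl fun l _ => ?_
              rw [Equiv.sum_comp π (X l), hXsum l]
          _ = 0 := by simp
      calc ∑ j, M k j = (∑ j, X k j) - (∑ j, W k j) - (∑ j : Fin n, t k) := by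
            simp only [hMdef]
            rw [Finset.sum_sub_distrib, Finset.sum_sub_distrib]
        _ = -((n:ℝ) * t k) := by
            rw [hXsum k, hWs, Finset.sum_const, Finset.card_univ, Fintype.card_fin,
              nsmul_eq_mul]
            ring
    have htb : (n:ℝ) * ∑ k, (t k)^2 ≤ D := by
      have h1 : ∀ k, ((n:ℝ) * t k)^2 ≤ (n:ℝ) * ∑ j, (M k j)^2 := by
        intro k
        have hcs := Finset.sum_mul_sq_le_sq_mul_sq Finset.univ
          (fun _ : Fin n => (1:ℝ)) (fun j => M k j)
        have hone : ∑ _j : Fin n, (1:ℝ)^2 = (n:ℝ) := by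
          simp [Finset.sum_const, Finset.card_univ]
        calc ((n:ℝ)*t k)^2 = (∑ j, M k j)^2 := by rw [hMsum k]; ring
          _ = (∑ j, (1:ℝ) * M k j)^2 := by
              congr 1; exact Finset.sum_congr rfl fun j _ => (one_mul _).symm
          _ ≤ (∑ _j : Fin n, (1:ℝ)^2) * (∑ j, (M k j)^2) := hcs
          _ = (n:ℝ) * ∑ j, (M k j)^2 := by rw [hone]
      have h2 : ∑ k, ((n:ℝ)*t k)^2 ≤ (n:ℝ) * D := by
        have hsw : ∑ k, ∑ j, (M k j)^2 = D := by rw [hDdef, Finset.sum_comm]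
        calc ∑ k, ((n:ℝ)*t k)^2 ≤ ∑ k, (n:ℝ) * ∑ j, (M k j)^2 :=
              Finset.sum_le_sum fun k _ => h1 k
          _ = (n:ℝ) * D := by rw [← Finset.mul_sum, hsw]
      have h3 : ∑ k, ((n:ℝ)*t k)^2 = (n:ℝ)^2 * ∑ k, (t k)^2 := by
        rw [Finset.mul_sum]
        exact Finset.sum_congr rfl fun k _ => by ring
      rw [h3] at h2
      nlinarith [h2, hn0]
    have htb2 : ∑ k, (t k)^2 ≤ D := by
      have hnn : 0 ≤ ∑ k, (t k)^2 := Finset.sum_nonneg fun k _ => sq_nonneg _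
      nlinarith [htb, hnn, hn1]
    set v : Fin (m+1) → ℝ := fun k => W k i0 with hvdef
    have hMi0 : ∀ k, M k i0 = -(v k + t k) := by
      intro k; simp only [hMdef, hvdef]; rw [hXcol0 k]; ring
    have hA2 : ∑ k, (v k)^2 = ∑ l, (X l k0)^2 := by
      simp only [hvdef, hWdef, hk0def]
      exact ortho_norm hR (fun l => X l (π i0))
    have hA2' : ∑ l, (X l k0)^2 = ∑ i, (a k0 i)^2 := by
      rw [Fin.sum_univ_castSucc]
      rw [hXlast k0]
      have hc : ∀ i : Fin m, X (Fin.castSucc i) k0 = a k0 i := by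
        intro i
        rw [hXval]
        rw [dif_pos (by simpa using i.isLt)]
        exact congrArg (a k0) (Fin.ext (by simp))
      rw [Finset.sum_congr rfl fun i _ => by rw [hc i]]
      norm_num
    have hμ' : 24*ε^2 ≤ ∑ k, (v k)^2 := by
      rw [hA2, hA2']
      exact hμ k0 hmv
    have hDv : ∑ k, (v k)^2 ≤ 4*D := by
      have h1 : ∑ k, (v k + t k)^2 ≤ D := by
        calc ∑ k, (v k + t k)^2 = ∑ k, (M k i0)^2 :=
              Finset.sum_congr rfl fun k _ => by rw [hMi0 k]; ring
          _ ≤ D := hcolD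
      calc ∑ k, (v k)^2 ≤ ∑ k, (2*(v k + t k)^2 + 2*(t k)^2) :=
            Finset.sum_le_sum fun k _ => by nlinarith [sq_nonneg (v k + 2*t k)]
        _ = 2*(∑ k, (v k + t k)^2) + 2*(∑ k, (t k)^2) := by
            rw [Finset.sum_add_distrib, ← Finset.mul_sum, ← Finset.mul_sum]
        _ ≤ 4*D := by linarith [h1, htb2]
    have hD6 : 6*ε^2 ≤ D := by nlinarith [le_trans hμ' hDv]
    exact quadA hC2 hD6


theorem dG_lower_bound_perturbation {m n : ℕ} (hm : 1 ≤ m) (hn : 3 ≤ n)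
    (a : Fin n → Fin m → ℝ)
    (ha0 : ∀ i, a ⟨0, by omega⟩ i = 0)
    (hdist : Function.Injective a)
    (hsum : ∀ i, ∑ j, a j i = 0) :
    ∃ ε₀ > (0 : ℝ), ∀ ε : ℝ, 0 < ε → ε ≤ ε₀ →
      ε ≤ dG (Xpert a 0) (Xpert a ε) := by
  set i0 : Fin n := ⟨0, by omega⟩ with hi0
  have hne : (Finset.univ.erase i0).Nonempty :=
    ⟨⟨1, by omega⟩, Finset.mem_erase.mpr ⟨by simp [hi0, Fin.ext_iff], Finset.mem_univ _⟩⟩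
  set μ : ℝ := (Finset.univ.erase i0).inf' hne (fun k => ∑ i, (a k i)^2) with hμdef
  have hμpos : 0 < μ := by
    rw [hμdef, Finset.lt_inf'_iff]
    intro k hk
    have hk0 : k ≠ i0 := (Finset.mem_erase.mp hk).1
    obtain ⟨i, hi⟩ : ∃ i, a k i ≠ 0 := by
      by_contra h
      push_neg at h
      exact hk0 (hdist (funext fun i => by rw [h i, ha0 i]))
    calc (0:ℝ) < (a k i)^2 := by positivity
      _ ≤ ∑ i, (a k i)^2 :=
        Finset.single_le_sum (f := fun i => (a k i)^2) (fun _ _ => sq_nonneg _)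
          (Finset.mem_univ _)
  refine ⟨Real.sqrt (μ/24), Real.sqrt_pos.mpr (by linarith), ?_⟩
  intro ε hε hεle
  have hεsq : ∀ k : Fin n, k ≠ i0 → 24*ε^2 ≤ ∑ i, (a k i)^2 := by
    intro k hk
    have h1 : ε^2 ≤ μ/24 := by
      calc ε^2 ≤ (Real.sqrt (μ/24))^2 := by
            apply pow_le_pow_left₀ hε.le hεle
        _ = μ/24 := Real.sq_sqrt (by positivity)
    have h2 : μ ≤ ∑ i, (a k i)^2 := by
      rw [hμdef]
      exact Finset.inf'_le _ (Finset.mem_erase.mpr ⟨hk, Finset.mem_univ _⟩)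
    linarith
  unfold dG
  have hnR : Nonempty {R : Matrix (Fin (m+1)) (Fin (m+1)) ℝ //
      R ∈ Matrix.orthogonalGroup (Fin (m+1)) ℝ} := ⟨⟨1, one_mem _⟩⟩
  refine le_ciInf fun π => le_ciInf fun R => le_ciInf fun t => ?_
  have hkey := key_bound hm hn a ha0 hsum ε hε hεsq π (R : Matrix (Fin (m+1)) (Fin (m+1)) ℝ) R.2 t
  calc ε = Real.sqrt (ε^2) := (Real.sqrt_sq hε.le).symm
    _ ≤ _ := Real.sqrt_le_sqrt hkey
end

section
/- Let f: R^{d×n} → R^m be invariant under the group G+ generated by column permutations, proper rotations (SO(d)), and translations, and suppose f is bi-Lipschitz with respect to d_{G+}: c·d_{G+}(X,Y) ≤ ‖f(X) - f(Y)‖ ≤ C·d_{G+}(X,Y). Fix R_0 ∈ O(d) with det(R_0) = -1 and R_0² = I, and let ψ: R^{m}×R^{m} → R^k be symmetric (ψ(u,v) = ψ(v,u)) and bi-Lipschitz with respect to the metric D((u,v),(u',v')) = min{‖u-u'‖+‖v-v'‖, ‖u-v'‖+‖v-u'‖}. Then f̃(X) = ψ(f(X), f(R_0 X)) is invariant under the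 full group G (generated by permutations, all of O(d), and translations) and bi-Lipschitz with respect to d_G. -/
open Matrix


/-- Procrustes Matching metric with proper rotations only. -/
noncomputable def dGp {d n : ℕ} (X Y : Matrix (Fin d) (Fin n) ℝ) : ℝ :=
  ⨅ π : Equiv.Perm (Fin n),
    ⨅ R : {R : Matrix (Fin d) (Fin d) ℝ //
        R ∈ Matrix.orthogonalGroup (Fin d) ℝ ∧ R.det = 1},
      ⨅ t : Fin d → ℝ,
        Real.sqrt (∑ j, ∑ k,
          (X k j - (∑ l, (R : Matrix (Fin d) (Fin d) ℝ) k l * Y l (π j)) - t k)^2)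

/-- The action of a (permutation, orthogonal matrix, translation) triple on a point set. -/
noncomputable def gact {d n : ℕ} (π : Equiv.Perm (Fin n))
    (R : Matrix (Fin d) (Fin d) ℝ) (t : Fin d → ℝ)
    (X : Matrix (Fin d) (Fin n) ℝ) : Matrix (Fin d) (Fin n) ℝ :=
  fun k j => (∑ l, R k l * X l (π j)) + t k


namespace SymAux

variable {d n : ℕ}

noncomputable def cost (X Y : Matrix (Fin d) (Fin n) ℝ) (π : Equiv.Perm (Fin n))
    (R : Matrix (Fin d) (Fin d) ℝ) (t : Fin d → ℝ) : ℝ :=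
  Real.sqrt (∑ j, ∑ k, (X k j - (∑ l, R k l * Y l (π j)) - t k)^2)

lemma cost_nonneg (X Y : Matrix (Fin d) (Fin n) ℝ) (π) (R) (t) :
    0 ≤ cost X Y π R t := Real.sqrt_nonneg _

lemma cost_eq (X Y : Matrix (Fin d) (Fin n) ℝ) (π) (R) (t) :
    cost X Y π R t = Real.sqrt (∑ j, ∑ k, (X k j - (R * Y) k (π j) - t k)^2) := by
  simp [cost, Matrix.mul_apply]

lemma dG_def (X Y : Matrix (Fin d) (Fin n) ℝ) :
    dG X Y = ⨅ π : Equiv.Perm (Fin n),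
      ⨅ R : {R : Matrix (Fin d) (Fin d) ℝ // R ∈ Matrix.orthogonalGroup (Fin d) ℝ},
        ⨅ t : Fin d → ℝ, cost X Y π (R : Matrix (Fin d) (Fin d) ℝ) t := rfl

lemma dGp_def (X Y : Matrix (Fin d) (Fin n) ℝ) :
    dGp X Y = ⨅ π : Equiv.Perm (Fin n),
      ⨅ R : {R : Matrix (Fin d) (Fin d) ℝ //
          R ∈ Matrix.orthogonalGroup (Fin d) ℝ ∧ R.det = 1},
        ⨅ t : Fin d → ℝ, cost X Y π (R : Matrix (Fin d) (Fin d) ℝ) t := rfl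

instance : Nonempty {R : Matrix (Fin d) (Fin d) ℝ // R ∈ Matrix.orthogonalGroup (Fin d) ℝ} :=
  ⟨⟨1, one_mem _⟩⟩

instance : Nonempty {R : Matrix (Fin d) (Fin d) ℝ //
    R ∈ Matrix.orthogonalGroup (Fin d) ℝ ∧ R.det = 1} :=
  ⟨⟨1, one_mem _, Matrix.det_one⟩⟩

lemma bdd_inner (X Y : Matrix (Fin d) (Fin n) ℝ) (π) (R) :
    BddBelow (Set.range fun t : Fin d → ℝ => cost X Y π R t) :=
  ⟨0, by rintro x ⟨t, rfl⟩; exact cost_nonneg _ _ _ _ _⟩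

lemma iInf_t_nonneg (X Y : Matrix (Fin d) (Fin n) ℝ) (π) (R) :
    0 ≤ ⨅ t : Fin d → ℝ, cost X Y π R t :=
  Real.iInf_nonneg fun t => cost_nonneg _ _ _ _ _

lemma dG_le (X Y : Matrix (Fin d) (Fin n) ℝ) (π) (R : Matrix (Fin d) (Fin d) ℝ)
    (hR : R ∈ Matrix.orthogonalGroup (Fin d) ℝ) (t) : dG X Y ≤ cost X Y π R t := by
  have h3 : (⨅ t : Fin d → ℝ, cost X Y π R t) ≤ cost X Y π R t :=
    ciInf_le (bdd_inner X Y π R) t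
  have h2 : (⨅ R' : {R : Matrix (Fin d) (Fin d) ℝ // R ∈ Matrix.orthogonalGroup (Fin d) ℝ},
      ⨅ t : Fin d → ℝ, cost X Y π (R' : Matrix (Fin d) (Fin d) ℝ) t) ≤
      ⨅ t : Fin d → ℝ, cost X Y π R t := by
    have := ciInf_le (f := fun R' : {R : Matrix (Fin d) (Fin d) ℝ //
        R ∈ Matrix.orthogonalGroup (Fin d) ℝ} =>
        ⨅ t : Fin d → ℝ, cost X Y π (R' : Matrix (Fin d) (Fin d) ℝ) t)
      ⟨0, by rintro x ⟨R', rfl⟩; exact iInf_t_nonneg _ _ _ _⟩ ⟨R, hR⟩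
    exact this
  have h1 : dG X Y ≤ ⨅ R' : {R : Matrix (Fin d) (Fin d) ℝ //
      R ∈ Matrix.orthogonalGroup (Fin d) ℝ},
      ⨅ t : Fin d → ℝ, cost X Y π (R' : Matrix (Fin d) (Fin d) ℝ) t := by
    rw [dG_def]
    refine ciInf_le ⟨0, ?_⟩ π
    rintro x ⟨π', rfl⟩
    exact Real.iInf_nonneg fun R' => iInf_t_nonneg _ _ _ _
  exact h1.trans (h2.trans h3)

lemma dGp_le (X Y : Matrix (Fin d) (Fin n) ℝ) (π) (R : Matrix (Fin d) (Fin d) ℝ)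
    (hR : R ∈ Matrix.orthogonalGroup (Fin d) ℝ ∧ R.det = 1) (t) :
    dGp X Y ≤ cost X Y π R t := by
  have h3 : (⨅ t : Fin d → ℝ, cost X Y π R t) ≤ cost X Y π R t :=
    ciInf_le (bdd_inner X Y π R) t
  have h2 : (⨅ R' : {R : Matrix (Fin d) (Fin d) ℝ //
      R ∈ Matrix.orthogonalGroup (Fin d) ℝ ∧ R.det = 1},
      ⨅ t : Fin d → ℝ, cost X Y π (R' : Matrix (Fin d) (Fin d) ℝ) t) ≤
      ⨅ t : Fin d → ℝ, cost X Y π R t := by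
    have := ciInf_le (f := fun R' : {R : Matrix (Fin d) (Fin d) ℝ //
        R ∈ Matrix.orthogonalGroup (Fin d) ℝ ∧ R.det = 1} =>
        ⨅ t : Fin d → ℝ, cost X Y π (R' : Matrix (Fin d) (Fin d) ℝ) t)
      ⟨0, by rintro x ⟨R', rfl⟩; exact iInf_t_nonneg _ _ _ _⟩ ⟨R, hR⟩
    exact this
  have h1 : dGp X Y ≤ ⨅ R' : {R : Matrix (Fin d) (Fin d) ℝ //
      R ∈ Matrix.orthogonalGroup (Fin d) ℝ ∧ R.det = 1},
      ⨅ t : Fin d → ℝ, cost X Y π (R' : Matrix (Fin d) (Fin d) ℝ) t := by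
    rw [dGp_def]
    refine ciInf_le ⟨0, ?_⟩ π
    rintro x ⟨π', rfl⟩
    exact Real.iInf_nonneg fun R' => iInf_t_nonneg _ _ _ _
  exact h1.trans (h2.trans h3)

lemma le_dG (X Y : Matrix (Fin d) (Fin n) ℝ) (c : ℝ)
    (h : ∀ π (R : Matrix (Fin d) (Fin d) ℝ),
      R ∈ Matrix.orthogonalGroup (Fin d) ℝ → ∀ t, c ≤ cost X Y π R t) :
    c ≤ dG X Y := by
  rw [dG_def]
  exact le_ciInf fun π => le_ciInf fun R => le_ciInf fun t => h π R R.2 t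

lemma le_dGp (X Y : Matrix (Fin d) (Fin n) ℝ) (c : ℝ)
    (h : ∀ π (R : Matrix (Fin d) (Fin d) ℝ),
      R ∈ Matrix.orthogonalGroup (Fin d) ℝ → R.det = 1 → ∀ t, c ≤ cost X Y π R t) :
    c ≤ dGp X Y := by
  rw [dGp_def]
  exact le_ciInf fun π => le_ciInf fun R => le_ciInf fun t => h π R R.2.1 R.2.2 t

lemma dGp_nonneg (X Y : Matrix (Fin d) (Fin n) ℝ) : 0 ≤ dGp X Y :=
  le_dGp X Y 0 fun _ _ _ _ _ => cost_nonneg _ _ _ _ _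

lemma orth_sum (Q : Matrix (Fin d) (Fin d) ℝ) (hQ : Qᵀ * Q = 1) (v : Fin d → ℝ) :
    ∑ i, (∑ l, Q i l * v l)^2 = ∑ i, (v i)^2 := by
  have h1 : ∑ i, (∑ l, Q i l * v l)^2 = (Q.mulVec v) ⬝ᵥ (Q.mulVec v) := by
    simp [dotProduct, Matrix.mulVec, sq]
  have h2 : (Q.mulVec v) ⬝ᵥ (Q.mulVec v) = v ⬝ᵥ v := by
    rw [Matrix.dotProduct_mulVec, ← Matrix.mulVec_transpose, Matrix.mulVec_mulVec, hQ,
      Matrix.one_mulVec]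
  rw [h1, h2]; simp [dotProduct, sq]

lemma orth_tmul (R : Matrix (Fin d) (Fin d) ℝ) (hR : R ∈ Matrix.orthogonalGroup (Fin d) ℝ) :
    Rᵀ * R = 1 := by
  have h := (Matrix.mem_orthogonalGroup_iff' (Fin d) ℝ).mp hR
  have hs : star R = Rᵀ := by ext i j; simp [Matrix.star_apply]
  exact h

lemma det_pm (R : Matrix (Fin d) (Fin d) ℝ) (hR : R ∈ Matrix.orthogonalGroup (Fin d) ℝ) :
    R.det = 1 ∨ R.det = -1 := by
  have h := (Matrix.mem_orthogonalGroup_iff (Fin d) ℝ).mp hR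
  have hs : star R = Rᵀ := by ext i j; simp [Matrix.star_apply]
  have hd : R.det * R.det = 1 := by
    have := congrArg Matrix.det h
    rwa [Matrix.det_mul, Matrix.det_transpose, Matrix.det_one] at this
  exact mul_self_eq_one_iff.mp hd

lemma gact_factor (π : Equiv.Perm (Fin n)) (A B : Matrix (Fin d) (Fin d) ℝ)
    (t : Fin d → ℝ) (X : Matrix (Fin d) (Fin n) ℝ) :
    gact π (A * B) t X = gact π A t (B * X) := by
  funext k j
  show (∑ l, (A*B) k l * X l (π j)) + t k = (∑ l, A k l * (B*X) l (π j)) + t k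
  rw [show ∑ l, (A*B) k l * X l (π j) = ((A*B)*X) k (π j) from (Matrix.mul_apply).symm,
    show ∑ l, A k l * (B*X) l (π j) = (A*(B*X)) k (π j) from (Matrix.mul_apply).symm,
    Matrix.mul_assoc]

lemma mul_gact (A : Matrix (Fin d) (Fin d) ℝ) (π : Equiv.Perm (Fin n))
    (R : Matrix (Fin d) (Fin d) ℝ) (t : Fin d → ℝ) (X : Matrix (Fin d) (Fin n) ℝ) :
    A * gact π R t X = gact π (A * R) (A.mulVec t) X := by
  funext k j
  show ∑ l, A k l * gact π R t X l j = (∑ i, (A*R) k i * X i (π j)) + A.mulVec t k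
  simp only [gact, mul_add, Finset.sum_add_distrib]
  congr 1
  · simp_rw [show ∀ l, ∑ i, R l i * X i (π j) = (R*X) l (π j) from
      fun l => (Matrix.mul_apply).symm]
    rw [show ∑ l, A k l * (R*X) l (π j) = (A*(R*X)) k (π j) from (Matrix.mul_apply).symm,
      show ∑ i, (A*R) k i * X i (π j) = ((A*R)*X) k (π j) from (Matrix.mul_apply).symm,
      Matrix.mul_assoc]

variable (R₀ : Matrix (Fin d) (Fin d) ℝ)

lemma cost_shift (hsq : R₀ * R₀ = 1) (X Y : Matrix (Fin d) (Fin n) ℝ) (π) (R) (t) :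
    cost X (R₀ * Y) π R t = cost X Y π (R * R₀) t := by
  rw [cost_eq, cost_eq]
  have h : R * (R₀ * Y) = (R * R₀) * Y := (Matrix.mul_assoc R R₀ Y).symm
  rw [h]

lemma cost_conj (ho : R₀ᵀ * R₀ = 1) (hsq : R₀ * R₀ = 1)
    (X Y : Matrix (Fin d) (Fin n) ℝ) (π) (R) (t) :
    cost (R₀ * X) (R₀ * Y) π (R₀ * R * R₀) (R₀.mulVec t) = cost X Y π R t := by
  rw [cost_eq, cost_eq]
  have hM : (R₀ * R * R₀) * (R₀ * Y) = R₀ * (R * Y) := by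
    rw [Matrix.mul_assoc (R₀ * R) R₀ (R₀ * Y), ← Matrix.mul_assoc R₀ R₀ Y, hsq,
      Matrix.one_mul, Matrix.mul_assoc]
  rw [hM]
  congr 1
  apply Finset.sum_congr rfl
  intro j _
  have hv : ∀ i, (R₀ * X) i j - (R₀ * (R * Y)) i (π j) - R₀.mulVec t i
      = ∑ l, R₀ i l * (X l j - (R * Y) l (π j) - t l) := by
    intro i
    simp [Matrix.mul_apply, Matrix.mulVec, dotProduct, mul_sub,
      Finset.sum_sub_distrib]
  simp_rw [hv]
  exact orth_sum R₀ ho fun l => X l j - (R * Y) l (π j) - t l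

lemma dGp_conj_le (hmem : R₀ ∈ Matrix.orthogonalGroup (Fin d) ℝ)
    (hdet : R₀.det = -1) (hsq : R₀ * R₀ = 1) (X Y : Matrix (Fin d) (Fin n) ℝ) :
    dGp (R₀ * X) (R₀ * Y) ≤ dGp X Y := by
  refine le_dGp X Y _ fun π R hm hd t => ?_
  have h1 : dGp (R₀ * X) (R₀ * Y) ≤ cost (R₀ * X) (R₀ * Y) π (R₀ * R * R₀) (R₀.mulVec t) := by
    refine dGp_le _ _ π _ ⟨mul_mem (mul_mem hmem hm) hmem, ?_⟩ _
    simp [Matrix.det_mul, hdet, hd]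
  rwa [cost_conj R₀ (orth_tmul R₀ hmem) hsq] at h1

lemma dGp_conj (hmem : R₀ ∈ Matrix.orthogonalGroup (Fin d) ℝ)
    (hdet : R₀.det = -1) (hsq : R₀ * R₀ = 1) (X Y : Matrix (Fin d) (Fin n) ℝ) :
    dGp (R₀ * X) (R₀ * Y) = dGp X Y := by
  refine le_antisymm (dGp_conj_le R₀ hmem hdet hsq X Y) ?_
  have h := dGp_conj_le R₀ hmem hdet hsq (R₀ * X) (R₀ * Y)
  rwa [← Matrix.mul_assoc, hsq, Matrix.one_mul, ← Matrix.mul_assoc, hsq, Matrix.one_mul] at h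

lemma dG_eq_min (hmem : R₀ ∈ Matrix.orthogonalGroup (Fin d) ℝ)
    (hdet : R₀.det = -1) (hsq : R₀ * R₀ = 1) (X Y : Matrix (Fin d) (Fin n) ℝ) :
    dG X Y = min (dGp X Y) (dGp X (R₀ * Y)) := by
  refine le_antisymm (le_min ?_ ?_) ?_
  · exact le_dGp X Y _ fun π R hm hd t => dG_le X Y π R hm t
  · refine le_dGp X (R₀ * Y) _ fun π R hm hd t => ?_
    rw [cost_shift R₀ hsq]
    exact dG_le X Y π (R * R₀) (mul_mem hm hmem) t
  · refine le_dG X Y _ fun π R hm t => ?_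
    rcases det_pm R hm with h1 | h1
    · exact min_le_of_left_le (dGp_le X Y π R ⟨hm, h1⟩ t)
    · refine min_le_of_right_le ?_
      have h2 : dGp X (R₀ * Y) ≤ cost X (R₀ * Y) π (R * R₀) t := by
        refine dGp_le _ _ π _ ⟨mul_mem hm hmem, ?_⟩ _
        simp [Matrix.det_mul, hdet, h1]
      rwa [cost_shift R₀ hsq, Matrix.mul_assoc, hsq, Matrix.mul_one] at h2

end SymAux

open SymAux in
theorem symmetrization_biLipschitz {d n m k : ℕ}
    (f : Matrix (Fin d) (Fin n) ℝ → EuclideanSpace ℝ (Fin m))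
    (hf_inv : ∀ (X : Matrix (Fin d) (Fin n) ℝ) (π : Equiv.Perm (Fin n))
        (R : Matrix (Fin d) (Fin d) ℝ) (t : Fin d → ℝ),
      R ∈ Matrix.orthogonalGroup (Fin d) ℝ → R.det = 1 → f (gact π R t X) = f X)
    (cf Cf : ℝ) (hcf : 0 < cf) (hCf : 0 < Cf)
    (hf_bilip : ∀ X Y : Matrix (Fin d) (Fin n) ℝ,
      cf * dGp X Y ≤ ‖f X - f Y‖ ∧ ‖f X - f Y‖ ≤ Cf * dGp X Y)
    (R₀ : Matrix (Fin d) (Fin d) ℝ)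
    (hR₀ : R₀ ∈ Matrix.orthogonalGroup (Fin d) ℝ)
    (hdet : R₀.det = -1) (hR₀sq : R₀ * R₀ = 1)
    (ψ : EuclideanSpace ℝ (Fin m) → EuclideanSpace ℝ (Fin m) → EuclideanSpace ℝ (Fin k))
    (hψ_symm : ∀ u v, ψ u v = ψ v u)
    (cψ Cψ : ℝ) (hcψ : 0 < cψ) (hCψ : 0 < Cψ)
    (hψ_bilip : ∀ u v u' v' : EuclideanSpace ℝ (Fin m),
      cψ * min (‖u - u'‖ + ‖v - v'‖) (‖u - v'‖ + ‖v - u'‖) ≤ ‖ψ u v - ψ u' v'‖ ∧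
      ‖ψ u v - ψ u' v'‖ ≤ Cψ * min (‖u - u'‖ + ‖v - v'‖) (‖u - v'‖ + ‖v - u'‖)) :
    (∀ (X : Matrix (Fin d) (Fin n) ℝ) (π : Equiv.Perm (Fin n))
        (R : Matrix (Fin d) (Fin d) ℝ) (t : Fin d → ℝ),
      R ∈ Matrix.orthogonalGroup (Fin d) ℝ →
      ψ (f (gact π R t X)) (f (R₀ * gact π R t X)) = ψ (f X) (f (R₀ * X))) ∧
    ∃ c' > (0 : ℝ), ∃ C' > (0 : ℝ), ∀ X Y : Matrix (Fin d) (Fin n) ℝ,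
      c' * dG X Y ≤ ‖ψ (f X) (f (R₀ * X)) - ψ (f Y) (f (R₀ * Y))‖ ∧
      ‖ψ (f X) (f (R₀ * X)) - ψ (f Y) (f (R₀ * Y))‖ ≤ C' * dG X Y := by
  constructor
  · intro X π R t hRm
    rcases det_pm R hRm with h1 | h1
    · have hg : f (gact π R t X) = f X := hf_inv X π R t hRm h1
      have e1 : R₀ * R = (R₀ * R * R₀) * R₀ := by
        rw [Matrix.mul_assoc (R₀ * R), hR₀sq, Matrix.mul_one]
      have hg2 : f (R₀ * gact π R t X) = f (R₀ * X) := by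
        rw [mul_gact, e1, gact_factor]
        exact hf_inv _ π (R₀ * R * R₀) _ (mul_mem (mul_mem hR₀ hRm) hR₀)
          (by rw [Matrix.det_mul, Matrix.det_mul, hdet, h1]; norm_num)
      rw [hg, hg2]
    · have e2 : R = (R * R₀) * R₀ := by rw [Matrix.mul_assoc, hR₀sq, Matrix.mul_one]
      have hg1 : f (gact π R t X) = f (R₀ * X) := by
        rw [show gact π R t X = gact π (R * R₀) t (R₀ * X) from by rw [← gact_factor, ← e2]]
        exact hf_inv _ π (R * R₀) t (mul_mem hRm hR₀)
          (by rw [Matrix.det_mul, h1, hdet]; norm_num)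
      have hg2 : f (R₀ * gact π R t X) = f X := by
        rw [mul_gact]
        exact hf_inv X π (R₀ * R) (R₀.mulVec t) (mul_mem hR₀ hRm)
          (by rw [Matrix.det_mul, hdet, h1]; norm_num)
      rw [hg1, hg2, hψ_symm]
  · refine ⟨cψ * cf, mul_pos hcψ hcf, Cψ * (2 * Cf), by positivity, fun X Y => ?_⟩
    have hmin := dG_eq_min R₀ hR₀ hdet hR₀sq X Y
    have hconj : dGp (R₀ * X) (R₀ * Y) = dGp X Y := dGp_conj R₀ hR₀ hdet hR₀sq X Y
    have hconj2 : dGp (R₀ * X) Y = dGp X (R₀ * Y) := by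
      have h := dGp_conj R₀ hR₀ hdet hR₀sq X (R₀ * Y)
      rwa [← Matrix.mul_assoc, hR₀sq, Matrix.one_mul] at h
    obtain ⟨hlo, hhi⟩ := hψ_bilip (f X) (f (R₀ * X)) (f Y) (f (R₀ * Y))
    set a := ‖f X - f Y‖ + ‖f (R₀ * X) - f (R₀ * Y)‖ with ha_def
    set b := ‖f X - f (R₀ * Y)‖ + ‖f (R₀ * X) - f Y‖ with hb_def
    constructor
    · have ha : cf * dG X Y ≤ a := by
        calc cf * dG X Y ≤ cf * dGp X Y := by
              refine mul_le_mul_of_nonneg_left ?_ hcf.le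
              rw [hmin]; exact min_le_left _ _
        _ ≤ ‖f X - f Y‖ := (hf_bilip X Y).1
        _ ≤ a := le_add_of_nonneg_right (norm_nonneg _)
      have hb : cf * dG X Y ≤ b := by
        calc cf * dG X Y ≤ cf * dGp X (R₀ * Y) := by
              refine mul_le_mul_of_nonneg_left ?_ hcf.le
              rw [hmin]; exact min_le_right _ _
        _ ≤ ‖f X - f (R₀ * Y)‖ := (hf_bilip X (R₀ * Y)).1
        _ ≤ b := le_add_of_nonneg_right (norm_nonneg _)
      calc cψ * cf * dG X Y = cψ * (cf * dG X Y) := by ring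
      _ ≤ cψ * min a b := mul_le_mul_of_nonneg_left (le_min ha hb) hcψ.le
      _ ≤ _ := hlo
    · have ha : a ≤ 2 * Cf * dGp X Y := by
        have h1 := (hf_bilip X Y).2
        have h2 := (hf_bilip (R₀ * X) (R₀ * Y)).2
        rw [hconj] at h2
        rw [ha_def]; linarith
      have hb : b ≤ 2 * Cf * dGp X (R₀ * Y) := by
        have h1 := (hf_bilip X (R₀ * Y)).2
        have h2 := (hf_bilip (R₀ * X) Y).2
        rw [hconj2] at h2
        rw [hb_def]; linarith
      have hminab : min a b ≤ 2 * Cf * dG X Y := by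
        rw [hmin]
        rcases le_total (dGp X Y) (dGp X (R₀ * Y)) with h | h
        · rw [min_eq_left h]; exact (min_le_left a b).trans ha
        · rw [min_eq_right h]; exact (min_le_right a b).trans hb
      calc ‖ψ (f X) (f (R₀ * X)) - ψ (f Y) (f (R₀ * Y))‖ ≤ Cψ * min a b := hhi
      _ ≤ Cψ * (2 * Cf * dG X Y) := mul_le_mul_of_nonneg_left hminab hCψ.le
      _ = Cψ * (2 * Cf) * dG X Y := by ring
end
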